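/- arXiv:math/0506044 — 6 statements merged into one kernel-verified Lean document; each statement's English description precedes it below -/
import Mathlib

section
/- Let X be a locally compact Hausdorff space and let T be a set of continuous functions h : X → [-∞,∞) such that: (i) T satisfies the tail condition for (μ_α^{t_α}); (ii) limsup_α μ_α(K)^{t_α} ≤ liminf_α μ_α(G)^{t_α} for every compact K ⊂ X and every open G ⊂ X with K ⊂ G; (iii) there is a real m with Λ̄(h) > m for all h ∈ T. If moreover T ⊂ C_K(X), then Λ(h) exists for every h ∈ T and there is a real M such that Λ(h) = sup_{x ∈ {m ≤ h ≤ M}} (h(x) − l_1(x)) = sup_{x ∈ X} (h(x) − l_1(x)) for all h ∈ T. -/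
/-!
The lower bound `e^{h(x) - l₁(x)} ≤ liminf_α μ_α^{t_α}(e^{h/t_α})` holds for every lower
semicontinuous `h`: integrate only over the open set `{h > r}` for `r < h(x)`.

For the upper bound split `X` into `{h < m}`, the band `{m ≤ h ≤ M}` and `{h > M}`. As `t_α → 0`,
`limsup (a_α + b_α)^{t_α}` is the larger of the two limsups, so the outer pieces, worth at most
`e^m` (as `μ_α(X) ≤ 1`) and less than `e^m` (tail condition), are negligible against
`Λ̄(h) > m`. A slice `{r ≤ h ≤ r + δ}` with `e^δ < 2` lies in one of the compact sets of the
`C_K(X)` condition, and on a compact `K` a finite cover by compact neighbourhoods together with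
(ii) gives `limsup μ_α(K)^{t_α} ≤ sup_K e^{-l₁}`. Covering the band by finitely many slices of
width `δ → 0` bounds the limsup by `sup_{band} e^{h - l₁}`, which closes the chain
`limsup ≤ sup_{band} ≤ sup_X ≤ liminf`.
-/

open Filter MeasureTheory Topology Set
open scoped ENNReal NNReal

noncomputable section

variable {X : Type*} [TopologicalSpace X] [MeasurableSpace X]
variable {A : Type*} [Preorder A]

/-- `(∫ e^{h/t_α} dμ_α)^{t_α}` as an extended nonnegative real. -/
noncomputable def expPow (μ : A → Measure X) (t : A → ℝ) (h : X → EReal) (a : A) : ℝ≥0∞ :=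
  (∫⁻ x, EReal.exp ((((t a)⁻¹ : ℝ) : EReal) * h x) ∂(μ a)) ^ (t a)

/-- `Λ̄(h) = log limsup_α (∫ e^{h/t_α} dμ_α)^{t_α}`. -/
noncomputable def LambdaBar (μ : A → Measure X) (t : A → ℝ) (h : X → EReal) : EReal :=
  ENNReal.log (Filter.limsup (expPow μ t h) Filter.atTop)

/-- `Λ̲(h) = log liminf_α (∫ e^{h/t_α} dμ_α)^{t_α}`. -/
noncomputable def LambdaUnder (μ : A → Measure X) (t : A → ℝ) (h : X → EReal) : EReal :=
  ENNReal.log (Filter.liminf (expPow μ t h) Filter.atTop)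

/-- `Λ(h)` exists when `Λ̲(h) = Λ̄(h)`. -/
def LambdaExists (μ : A → Measure X) (t : A → ℝ) (h : X → EReal) : Prop :=
  LambdaUnder μ t h = LambdaBar μ t h

/-- `l₁(x) = −log inf { liminf_α μ_α(G)^{t_α} : G open, x ∈ G }`. -/
noncomputable def lOne (μ : A → Measure X) (t : A → ℝ) (x : X) : EReal :=
  - ENNReal.log (⨅ (G : Set X) (_ : IsOpen G) (_ : x ∈ G),
      Filter.liminf (fun a => μ a G ^ (t a)) Filter.atTop)

/-- `l₀(x) = −log inf { limsup_α μ_α(G)^{t_α} : G open, x ∈ G }`. -/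
noncomputable def lZero (μ : A → Measure X) (t : A → ℝ) (x : X) : EReal :=
  - ENNReal.log (⨅ (G : Set X) (_ : IsOpen G) (_ : x ∈ G),
      Filter.limsup (fun a => μ a G ^ (t a)) Filter.atTop)

/-- The uniform tail condition for a family `T`. -/
def TailCondition (μ : A → Measure X) (t : A → ℝ) (T : Set (X → EReal)) : Prop :=
  ∀ ε : ℝ, 0 < ε → ∃ M : ℝ, ∀ h ∈ T,
    Filter.limsup (fun a =>
        (∫⁻ x in {x | (M : EReal) < h x}, EReal.exp ((((t a)⁻¹ : ℝ) : EReal) * h x) ∂(μ a))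
          ^ (t a)) Filter.atTop
      < ENNReal.ofReal ε

/-- Vague large deviation principle with powers `t` and rate function `J`. -/
def VagueLDP (μ : A → Measure X) (t : A → ℝ) (J : X → ℝ≥0∞) : Prop :=
  LowerSemicontinuous J ∧
  (∀ K : Set X, IsCompact K →
      Filter.limsup (fun a => μ a K ^ (t a)) Filter.atTop ≤ ⨆ x ∈ K, EReal.exp (-(J x : EReal))) ∧
  (∀ G : Set X, IsOpen G →
      (⨆ x ∈ G, EReal.exp (-(J x : EReal))) ≤ Filter.liminf (fun a => μ a G ^ (t a)) Filter.atTop)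

/-- Narrow large deviation principle with powers `t` and rate function `J`. -/
def NarrowLDP (μ : A → Measure X) (t : A → ℝ) (J : X → ℝ≥0∞) : Prop :=
  LowerSemicontinuous J ∧
  (∀ F : Set X, IsClosed F →
      Filter.limsup (fun a => μ a F ^ (t a)) Filter.atTop ≤ ⨆ x ∈ F, EReal.exp (-(J x : EReal))) ∧
  (∀ G : Set X, IsOpen G →
      (⨆ x ∈ G, EReal.exp (-(J x : EReal))) ≤ Filter.liminf (fun a => μ a G ^ (t a)) Filter.atTop)

/-- Exponential tightness of `(μ_α)` with respect to `(t_α)`. -/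
def ExpTight (μ : A → Measure X) (t : A → ℝ) : Prop :=
  ∀ ε : ℝ, 0 < ε → ∃ K : Set X, IsCompact K ∧
    Filter.limsup (fun a => μ a Kᶜ ^ (t a)) Filter.atTop < ENNReal.ofReal ε

/-- The linear function `h_λ(x) = λ x`, as an `EReal`-valued function on `ℝ`. -/
noncomputable def hlin (l : ℝ) : ℝ → EReal := fun x => ((l * x : ℝ) : EReal)

/-- Legendre-Fenchel transform of `L` restricted to `G` (extended by `+∞` off `G`):
`L|_G^*(x) = sup_{λ ∈ G} (λ x − L λ)`. -/
noncomputable def LegG (L : ℝ → ℝ) (G : Set ℝ) (x : ℝ) : EReal :=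
  ⨆ l ∈ G, ((l * x - L l : ℝ) : EReal)

/-- Abstract Legendre-Fenchel transform `Λ|_S^*(x) = sup_{h ∈ S} (h(x) − Λ(h))`. -/
noncomputable def LamStar (μ : A → Measure X) (t : A → ℝ) (S : Set (X → EReal)) (x : X) : EReal :=
  ⨆ h ∈ S, (h x - LambdaBar μ t h)

/-- The union of the ranges of the left and right derivatives of `L` restricted to `G`. -/
def ranLR (L : ℝ → ℝ) (G : Set ℝ) : Set ℝ :=
  {d : ℝ | ∃ l ∈ G, HasDerivWithinAt L d (Set.Iio l) l ∨ HasDerivWithinAt L d (Set.Ioi l) l}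

section RpowLimsup

variable {ι : Type*} {l : Filter ι} {s : ι → ℝ}

lemma tendsto_exp_coe_nhds_one (hs : Tendsto s l (𝓝 0)) :
    Tendsto (fun i => EReal.exp (s i)) l (𝓝 1) := by
  have h := ((ENNReal.continuous_exp.comp continuous_coe_real_ereal).tendsto 0).comp hs
  rwa [Function.comp_apply, EReal.coe_zero, EReal.exp_zero] at h

lemma ENNReal.le_of_forall_pos_le_exp_mul {x y : ℝ≥0∞}
    (h : ∀ ε : ℝ, 0 < ε → x ≤ EReal.exp ε * y) : x ≤ y := by
  have hlim : Tendsto (fun ε : ℝ => EReal.exp ε * y) (𝓝[>] 0) (𝓝 y) := by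
    simpa using ENNReal.Tendsto.mul_const
      (tendsto_exp_coe_nhds_one (tendsto_id.mono_left nhdsWithin_le_nhds)) (Or.inl one_ne_zero)
  exact ge_of_tendsto hlim (eventually_nhdsWithin_of_forall h)

/-- `u + v ≤ e · max u v`, and `e ^ s → 1`. -/
lemma limsup_add_rpow_le_max (hs0 : ∀ i, 0 ≤ s i) (hs : Tendsto s l (𝓝 0)) (u v : ι → ℝ≥0∞) :
    limsup (fun i => (u i + v i) ^ s i) l ≤
      max (limsup (fun i => u i ^ s i) l) (limsup (fun i => v i ^ s i) l) := by
  rcases l.eq_or_neBot with rfl | _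
  · simp
  have htwo : (2 : ℝ≥0∞) ≤ EReal.exp (1 : ℝ) := by
    rw [EReal.exp_coe, ← ENNReal.ofReal_ofNat]
    exact ENNReal.ofReal_le_ofReal (by linarith [Real.add_one_le_exp 1])
  have hpoint : ∀ i, (u i + v i) ^ s i ≤ EReal.exp (s i) * max (u i ^ s i) (v i ^ s i) := by
    intro i
    have hmono : Monotone fun x : ℝ≥0∞ => x ^ s i := ENNReal.monotone_rpow_of_nonneg (hs0 i)
    calc (u i + v i) ^ s i ≤ (EReal.exp (1 : ℝ) * max (u i) (v i)) ^ s i := by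
          refine hmono ((add_le_add (le_max_left (u i) (v i)) (le_max_right (u i) (v i))).trans ?_)
          rw [← two_mul]
          exact mul_le_mul_left htwo _
      _ = EReal.exp (s i) * max (u i ^ s i) (v i ^ s i) := by
          rw [ENNReal.mul_rpow_of_nonneg _ _ (hs0 i), ← EReal.exp_mul, ← EReal.coe_mul, one_mul,
            hmono.map_max]
  have hexp := (tendsto_exp_coe_nhds_one hs).limsup_eq
  calc limsup (fun i => (u i + v i) ^ s i) l
      ≤ limsup (fun i => EReal.exp (s i) * max (u i ^ s i) (v i ^ s i)) l :=
        limsup_le_limsup (.of_forall hpoint)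
    _ ≤ limsup (fun i => EReal.exp (s i)) l *
          limsup (fun i => max (u i ^ s i) (v i ^ s i)) l :=
        ENNReal.limsup_mul_le' (by rw [hexp]; exact Or.inl one_ne_zero)
          (by rw [hexp]; exact Or.inl ENNReal.one_ne_top)
    _ = _ := by rw [hexp, one_mul, limsup_max]

end RpowLimsup

lemma EReal.exp_inv_mul_rpow {r : ℝ} (hr : r ≠ 0) (c : EReal) :
    EReal.exp ((r⁻¹ : ℝ) * c) ^ r = EReal.exp c := by
  rw [← EReal.exp_mul, mul_comm, ← mul_assoc, ← EReal.coe_mul, mul_inv_cancel₀ hr, EReal.coe_one,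
    one_mul]

lemma ENNReal.log_iSup {ι : Sort*} (f : ι → ℝ≥0∞) :
    ENNReal.log (⨆ i, f i) = ⨆ i, ENNReal.log (f i) :=
  ENNReal.logOrderIso.map_iSup f

lemma EReal.exp_mul_le_of_forall_coe_lt {x : EReal} {c L : ℝ≥0∞}
    (h : ∀ r : ℝ, (r : EReal) < x → EReal.exp r * c ≤ L) : EReal.exp x * c ≤ L := by
  have hexp : EReal.exp x = ⨆ (r : ℝ) (_ : (r : EReal) < x), EReal.exp r := by
    refine le_antisymm (le_of_forall_lt fun d hd => ?_)
      (iSup₂_le fun r hr => EReal.exp_monotone hr.le)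
    obtain ⟨r, hdr, hrx⟩ := EReal.lt_iff_exists_real_btwn.1
      (EReal.exp_lt_exp_iff.1 (by rwa [ENNReal.exp_log]) : ENNReal.log d < x)
    calc d = EReal.exp (ENNReal.log d) := (ENNReal.exp_log d).symm
      _ < EReal.exp r := EReal.exp_lt_exp_iff.2 hdr
      _ ≤ ⨆ (r : ℝ) (_ : (r : EReal) < x), EReal.exp r :=
        le_iSup₂ (f := fun (r : ℝ) (_ : (r : EReal) < x) => EReal.exp r) r hrx
  rw [hexp, ENNReal.iSup_mul]
  refine iSup_le fun r => ?_
  rw [ENNReal.iSup_mul]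
  exact iSup_le (h r)

def expPowOn {Ω ι : Type*} [MeasurableSpace Ω] (μ : ι → Measure Ω) (t : ι → ℝ) (h : Ω → EReal)
    (S : Set Ω) (a : ι) : ℝ≥0∞ :=
  (∫⁻ x in S, EReal.exp ((((t a)⁻¹ : ℝ) : EReal) * h x) ∂(μ a)) ^ (t a)

/-- `e^{-l₁(x)}`. -/
def expNegLOne (μ : A → Measure X) (t : A → ℝ) (x : X) : ℝ≥0∞ :=
  ⨅ (G : Set X) (_ : IsOpen G) (_ : x ∈ G), liminf (fun a => μ a G ^ (t a)) atTop

def LimsupCompactLeLiminfOpen (μ : A → Measure X) (t : A → ℝ) : Prop :=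
  ∀ K G : Set X, IsCompact K → IsOpen G → K ⊆ G →
    limsup (fun a => μ a K ^ (t a)) atTop ≤ liminf (fun a => μ a G ^ (t a)) atTop

/-- The condition defining `C_K(X)`, continuity aside. -/
def HasCompactExpLevels (h : X → EReal) : Prop :=
  ∀ x : X, ∀ ε : ℝ, 0 < ε → ENNReal.ofReal ε < EReal.exp (h x) →
    IsCompact {y : X | EReal.exp (h x) - ENNReal.ofReal ε ≤ EReal.exp (h y) ∧
      EReal.exp (h y) ≤ EReal.exp (h x) + ENNReal.ofReal ε}

section ExpPowOn

variable {Ω ι : Type*} [MeasurableSpace Ω] {μ : ι → Measure Ω} {t : ι → ℝ} {h : Ω → EReal}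

lemma expPow_eq_expPowOn_univ : expPow μ t h = expPowOn μ t h univ := by
  funext a
  simp only [expPow, expPowOn, Measure.restrict_univ]

lemma expPowOn_empty {a : ι} (ha : 0 < t a) : expPowOn μ t h ∅ a = 0 := by
  simp [expPowOn, ENNReal.zero_rpow_of_pos ha]

lemma expPowOn_mono {a : ι} (ha : 0 ≤ t a) {S S' : Set Ω} (hSS' : S ⊆ S') :
    expPowOn μ t h S a ≤ expPowOn μ t h S' a :=
  ENNReal.rpow_le_rpow (lintegral_mono_set hSS') ha

lemma expPowOn_le_of_le {a : ι} (ha : 0 < t a) {S : Set Ω} {c : EReal}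
    (hc : ∀ y ∈ S, h y ≤ c) : expPowOn μ t h S a ≤ EReal.exp c * μ a S ^ t a := by
  have hinv : (0 : EReal) ≤ ((t a)⁻¹ : ℝ) := EReal.coe_nonneg.2 (inv_nonneg.2 ha.le)
  calc expPowOn μ t h S a ≤ (∫⁻ _ in S, EReal.exp (((t a)⁻¹ : ℝ) * c) ∂μ a) ^ t a :=
        ENNReal.rpow_le_rpow (setLIntegral_mono measurable_const fun y hy =>
          EReal.exp_monotone (mul_le_mul_of_nonneg_left (hc y hy) hinv)) ha.le
    _ = EReal.exp c * μ a S ^ t a := by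
        rw [setLIntegral_const, ENNReal.mul_rpow_of_nonneg _ _ ha.le, EReal.exp_inv_mul_rpow ha.ne']

lemma le_expPowOn_of_le {a : ι} (ha : 0 < t a) {S : Set Ω} (hS : MeasurableSet S) {c : EReal}
    (hc : ∀ y ∈ S, c ≤ h y) : EReal.exp c * μ a S ^ t a ≤ expPowOn μ t h S a := by
  have hinv : (0 : EReal) ≤ ((t a)⁻¹ : ℝ) := EReal.coe_nonneg.2 (inv_nonneg.2 ha.le)
  calc EReal.exp c * μ a S ^ t a = (∫⁻ _ in S, EReal.exp (((t a)⁻¹ : ℝ) * c) ∂μ a) ^ t a := by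
        rw [setLIntegral_const, ENNReal.mul_rpow_of_nonneg _ _ ha.le, EReal.exp_inv_mul_rpow ha.ne']
    _ ≤ expPowOn μ t h S a :=
        ENNReal.rpow_le_rpow (setLIntegral_mono' hS fun y hy =>
          EReal.exp_monotone (mul_le_mul_of_nonneg_left (hc y hy) hinv)) ha.le

lemma limsup_expPowOn_union_le {l : Filter ι} (ht0 : ∀ a, 0 ≤ t a) (ht : Tendsto t l (𝓝 0))
    (S S' : Set Ω) :
    limsup (expPowOn μ t h (S ∪ S')) l ≤
      max (limsup (expPowOn μ t h S) l) (limsup (expPowOn μ t h S') l) :=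
  (limsup_le_limsup (.of_forall fun a =>
    ENNReal.rpow_le_rpow (lintegral_union_le _ _ _) (ht0 a))).trans
      (limsup_add_rpow_le_max ht0 ht _ _)

lemma limsup_expPow_le_limsup_expPowOn_preimage_Icc {l : Filter ι} (hpos : ∀ a, 0 < t a)
    (ht : Tendsto t l (𝓝 0)) (hμ : ∀ a, μ a univ ≤ 1) {m M : ℝ}
    (htail : limsup (expPowOn μ t h {x | (M : EReal) < h x}) l < EReal.exp m)
    (hm : EReal.exp m < limsup (expPow μ t h) l) :
    limsup (expPow μ t h) l ≤ limsup (expPowOn μ t h (h ⁻¹' Icc (m : EReal) M)) l := by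
  have hcover : (univ : Set Ω) ⊆
      h ⁻¹' Iio (m : EReal) ∪ (h ⁻¹' Icc (m : EReal) M ∪ {x | (M : EReal) < h x}) := by
    intro x _
    rcases lt_or_ge (h x) m with hlt | hge
    · exact Or.inl hlt
    rcases le_or_gt (h x) M with hle | hgt
    · exact Or.inr (Or.inl ⟨hge, hle⟩)
    · exact Or.inr (Or.inr hgt)
  have hlow : limsup (expPowOn μ t h (h ⁻¹' Iio (m : EReal))) l ≤ EReal.exp m :=
    limsup_le_of_le (by isBoundedDefault) (.of_forall fun a =>
      (expPowOn_le_of_le (hpos a) fun y hy => le_of_lt hy).trans (mul_le_of_le_one_right'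
        (ENNReal.rpow_le_one ((measure_mono (subset_univ _)).trans (hμ a)) (hpos a).le)))
  have hsplit : limsup (expPow μ t h) l ≤
      max (limsup (expPowOn μ t h (h ⁻¹' Iio (m : EReal))) l)
        (max (limsup (expPowOn μ t h (h ⁻¹' Icc (m : EReal) M)) l)
          (limsup (expPowOn μ t h {x | (M : EReal) < h x}) l)) := by
    rw [expPow_eq_expPowOn_univ]
    refine (limsup_le_limsup (.of_forall fun a => expPowOn_mono (hpos a).le hcover)).trans ?_
    exact (limsup_expPowOn_union_le (fun a => (hpos a).le) ht _ _).trans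
      (max_le_max le_rfl (limsup_expPowOn_union_le (fun a => (hpos a).le) ht _ _))
  by_contra! hlt
  exact (hsplit.trans_lt (max_lt (hlow.trans_lt hm) (max_lt hlt (htail.trans hm)))).false

end ExpPowOn

lemma HasCompactExpLevels.isCompact_preimage_Icc {Y : Type*} [TopologicalSpace Y] {h : Y → EReal}
    (hCK : HasCompactExpLevels h) (hh : Continuous h) (r : ℝ) {δ : ℝ} (hδ : Real.exp δ < 2) :
    IsCompact (h ⁻¹' Icc (r : EReal) ((r + δ : ℝ) : EReal)) := by
  rcases (h ⁻¹' Icc (r : EReal) ((r + δ : ℝ) : EReal)).eq_empty_or_nonempty with hempty | ⟨x₀, hx₀⟩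
  · rw [hempty]
    exact isCompact_empty
  set ε := max (Real.exp (r + δ) - Real.exp r) (Real.exp r / 2)
  have hεpos : 0 < ε := lt_max_of_lt_right (by positivity)
  have hεwidth : Real.exp (r + δ) - Real.exp r ≤ ε := le_max_left _ _
  have hεlt : ε < Real.exp r := by
    refine max_lt ?_ (half_lt_self (Real.exp_pos r))
    rw [Real.exp_add]
    nlinarith [Real.exp_pos r]
  have hwidth : ∀ y ∈ h ⁻¹' Icc (r : EReal) ((r + δ : ℝ) : EReal),
      ∀ z ∈ h ⁻¹' Icc (r : EReal) ((r + δ : ℝ) : EReal),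
      EReal.exp (h y) ≤ EReal.exp (h z) + ENNReal.ofReal ε := by
    intro y hy z hz
    calc EReal.exp (h y) ≤ EReal.exp ((r + δ : ℝ) : EReal) := EReal.exp_monotone hy.2
      _ ≤ EReal.exp r + ENNReal.ofReal ε := by
          rw [EReal.exp_coe, EReal.exp_coe, ← ENNReal.ofReal_add (Real.exp_pos r).le hεpos.le]
          exact ENNReal.ofReal_le_ofReal (by linarith)
      _ ≤ EReal.exp (h z) + ENNReal.ofReal ε := by gcongr; exact hz.1
  have hεx₀ : ENNReal.ofReal ε < EReal.exp (h x₀) :=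
    ((ENNReal.ofReal_lt_ofReal_iff (Real.exp_pos r)).2 hεlt).trans_le (EReal.exp_monotone hx₀.1)
  exact (hCK x₀ ε hεpos hεx₀).of_isClosed_subset (isClosed_Icc.preimage hh) fun y hy =>
    ⟨tsub_le_iff_right.2 (hwidth x₀ hx₀ y hy), hwidth y hy x₀ hx₀⟩

section LimitBounds

variable {μ : A → Measure X} {t : A → ℝ} {h : X → EReal}

lemma exp_mul_expNegLOne_le_liminf [OpensMeasurableSpace X] (hpos : ∀ a, 0 < t a)
    (hh : LowerSemicontinuous h) (x : X) :
    EReal.exp (h x) * expNegLOne μ t x ≤ liminf (expPow μ t h) atTop := by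
  refine EReal.exp_mul_le_of_forall_coe_lt fun r hr => ?_
  have hG : IsOpen (h ⁻¹' Ioi (r : EReal)) := hh.isOpen_preimage r
  calc EReal.exp r * expNegLOne μ t x
      ≤ EReal.exp r * liminf (fun a => μ a (h ⁻¹' Ioi (r : EReal)) ^ t a) atTop := by
        gcongr
        exact (iInf₂_le _ hG).trans (iInf_le _ hr)
    _ = liminf (fun a => EReal.exp r * μ a (h ⁻¹' Ioi (r : EReal)) ^ t a) atTop :=
        (ENNReal.liminf_const_mul_of_ne_zero_of_ne_top
          (EReal.exp_eq_zero_iff.not.2 (EReal.coe_ne_bot r))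
          (EReal.exp_eq_top_iff.not.2 (EReal.coe_ne_top r))).symm
    _ ≤ liminf (expPow μ t h) atTop := by
        refine liminf_le_liminf (.of_forall fun a => ?_)
        rw [expPow_eq_expPowOn_univ]
        exact (le_expPowOn_of_le (hpos a) hG.measurableSet fun y hy => le_of_lt hy).trans
          (expPowOn_mono (hpos a).le (subset_univ _))

lemma limsup_rpow_measure_le_iSup_expNegLOne [LocallyCompactSpace X] (hpos : ∀ a, 0 < t a)
    (ht : Tendsto t atTop (𝓝 0)) (hKG : LimsupCompactLeLiminfOpen μ t) {K : Set X}
    (hK : IsCompact K) :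
    limsup (fun a => μ a K ^ t a) atTop ≤ ⨆ x ∈ K, expNegLOne μ t x := by
  refine le_of_forall_gt_imp_ge_of_dense fun d hd => ?_
  refine hK.induction_on (p := fun S => limsup (fun a => μ a S ^ t a) atTop ≤ d) ?_ ?_ ?_ ?_
  · refine limsup_le_of_le (by isBoundedDefault) (.of_forall fun a => ?_)
    simp [ENNReal.zero_rpow_of_pos (hpos a)]
  · intro S S' hSS' hS'
    exact (limsup_le_limsup (.of_forall fun a =>
      ENNReal.rpow_le_rpow (measure_mono hSS') (hpos a).le)).trans hS'
  · intro S S' hS hS'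
    calc limsup (fun a => μ a (S ∪ S') ^ t a) atTop
        ≤ limsup (fun a => (μ a S + μ a S') ^ t a) atTop :=
          limsup_le_limsup (.of_forall fun a =>
            ENNReal.rpow_le_rpow (measure_union_le S S') (hpos a).le)
      _ ≤ d := (limsup_add_rpow_le_max (fun a => (hpos a).le) ht _ _).trans (max_le hS hS')
  · intro x hx
    have hxd : expNegLOne μ t x < d :=
      (le_iSup₂ (f := fun x (_ : x ∈ K) => expNegLOne μ t x) x hx).trans_lt hd
    simp only [expNegLOne, iInf_lt_iff] at hxd
    obtain ⟨G, hG, hxG, hGd⟩ := hxd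
    obtain ⟨C, hC, hxC, hCG⟩ := exists_compact_subset hG hxG
    exact ⟨C, mem_nhdsWithin_of_mem_nhds (mem_interior_iff_mem_nhds.1 hxC),
      (hKG C G hC hG hCG).trans hGd.le⟩

lemma limsup_expPowOn_le_exp_mul_iSup [LocallyCompactSpace X] (hpos : ∀ a, 0 < t a)
    (ht : Tendsto t atTop (𝓝 0)) (hKG : LimsupCompactLeLiminfOpen μ t) {K : Set X}
    (hK : IsCompact K) {r δ : ℝ} (hKh : ∀ y ∈ K, (r : EReal) ≤ h y ∧ h y ≤ ((r + δ : ℝ) : EReal)) :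
    limsup (expPowOn μ t h K) atTop ≤
      EReal.exp δ * ⨆ x ∈ K, EReal.exp (h x) * expNegLOne μ t x := by
  calc limsup (expPowOn μ t h K) atTop
      ≤ limsup (fun a => EReal.exp ((r + δ : ℝ) : EReal) * μ a K ^ t a) atTop :=
        limsup_le_limsup (.of_forall fun a => expPowOn_le_of_le (hpos a) fun y hy => (hKh y hy).2)
    _ = EReal.exp ((r + δ : ℝ) : EReal) * limsup (fun a => μ a K ^ t a) atTop :=
        ENNReal.limsup_const_mul_of_ne_top (EReal.exp_eq_top_iff.not.2 (EReal.coe_ne_top _))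
    _ ≤ EReal.exp ((r + δ : ℝ) : EReal) * ⨆ x ∈ K, expNegLOne μ t x := by
        gcongr
        exact limsup_rpow_measure_le_iSup_expNegLOne hpos ht hKG hK
    _ ≤ EReal.exp δ * ⨆ x ∈ K, EReal.exp (h x) * expNegLOne μ t x := by
        simp only [ENNReal.mul_iSup]
        refine iSup₂_mono fun x hx => ?_
        rw [EReal.coe_add, EReal.exp_add, mul_comm (EReal.exp r), mul_assoc]
        gcongr
        exact (hKh x hx).1

lemma limsup_expPowOn_preimage_Icc_le [LocallyCompactSpace X] (hpos : ∀ a, 0 < t a)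
    (ht : Tendsto t atTop (𝓝 0)) (hKG : LimsupCompactLeLiminfOpen μ t) (hh : Continuous h)
    (hCK : HasCompactExpLevels h) (m M : ℝ) :
    limsup (expPowOn μ t h (h ⁻¹' Icc (m : EReal) M)) atTop ≤
      ⨆ x ∈ h ⁻¹' Icc (m : EReal) M, EReal.exp (h x) * expNegLOne μ t x := by
  refine ENNReal.le_of_forall_pos_le_exp_mul fun δ hδ => ?_
  have hlog2 : 0 < Real.log 2 := Real.log_pos one_lt_two
  obtain ⟨δ', hδ'pos, hδ'δ, hδ'2⟩ : ∃ δ', 0 < δ' ∧ δ' ≤ δ ∧ Real.exp δ' < 2 :=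
    ⟨min δ (Real.log 2 / 2), lt_min hδ (half_pos hlog2), min_le_left _ _,
      (Real.lt_log_iff_exp_lt two_pos).1 ((min_le_right _ _).trans_lt (half_lt_self hlog2))⟩
  -- compactness of `[m, M]` reduces the band to compact slices of width `δ'`
  refine (isCompact_Icc : IsCompact (Icc (m : EReal) M)).induction_on
    (p := fun I => limsup (expPowOn μ t h (h ⁻¹' I)) atTop ≤
      EReal.exp δ * ⨆ x ∈ h ⁻¹' Icc (m : EReal) M, EReal.exp (h x) * expNegLOne μ t x) ?_ ?_ ?_ ?_
  · refine (limsup_le_of_le (by isBoundedDefault) (.of_forall fun a => ?_)).trans zero_le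
    rw [preimage_empty, expPowOn_empty (hpos a)]
  · intro I I' hII' hI'
    exact (limsup_le_limsup (.of_forall fun a =>
      expPowOn_mono (hpos a).le (preimage_mono hII'))).trans hI'
  · intro I I' hI hI'
    rw [preimage_union]
    exact (limsup_expPowOn_union_le (fun a => (hpos a).le) ht _ _).trans (max_le hI hI')
  · intro v hv
    lift v to ℝ using ⟨ne_top_of_le_ne_top (EReal.coe_ne_top M) hv.2,
      ne_bot_of_le_ne_bot (EReal.coe_ne_bot m) hv.1⟩
    set J := Icc (m : EReal) M ∩ Icc ((v - δ' / 2 : ℝ) : EReal) ((v - δ' / 2 + δ' : ℝ) : EReal)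
    have hJ : J ∈ 𝓝[Icc (m : EReal) M] (v : EReal) := inter_mem_nhdsWithin _ <|
      Icc_mem_nhds (EReal.coe_lt_coe_iff.2 (by linarith)) (EReal.coe_lt_coe_iff.2 (by linarith))
    have hK : IsCompact (h ⁻¹' J) :=
      (hCK.isCompact_preimage_Icc hh (v - δ' / 2) hδ'2).of_isClosed_subset
        ((isClosed_Icc.inter isClosed_Icc).preimage hh) (preimage_mono inter_subset_right)
    refine ⟨J, hJ, ?_⟩
    calc limsup (expPowOn μ t h (h ⁻¹' J)) atTop
        ≤ EReal.exp δ' * ⨆ x ∈ h ⁻¹' J, EReal.exp (h x) * expNegLOne μ t x :=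
          limsup_expPowOn_le_exp_mul_iSup hpos ht hKG hK fun y hy => hy.2
      _ ≤ _ := mul_le_mul' (EReal.exp_monotone (EReal.coe_le_coe_iff.2 hδ'δ))
          (biSup_mono fun x hx => hx.1)

theorem liminf_expPow_eq_limsup_eq_iSup [(atTop : Filter A).NeBot] [LocallyCompactSpace X]
    [OpensMeasurableSpace X] (hpos : ∀ a, 0 < t a) (ht : Tendsto t atTop (𝓝 0))
    (hμ : ∀ a, μ a univ ≤ 1) (hKG : LimsupCompactLeLiminfOpen μ t) (hh : Continuous h)
    (hCK : HasCompactExpLevels h) {m M : ℝ}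
    (htail : limsup (expPowOn μ t h {x | (M : EReal) < h x}) atTop < EReal.exp m)
    (hm : EReal.exp m < limsup (expPow μ t h) atTop) :
    liminf (expPow μ t h) atTop = limsup (expPow μ t h) atTop ∧
    limsup (expPow μ t h) atTop =
      ⨆ x ∈ h ⁻¹' Icc (m : EReal) M, EReal.exp (h x) * expNegLOne μ t x ∧
    limsup (expPow μ t h) atTop = ⨆ x, EReal.exp (h x) * expNegLOne μ t x := by
  have hband : limsup (expPow μ t h) atTop ≤
      ⨆ x ∈ h ⁻¹' Icc (m : EReal) M, EReal.exp (h x) * expNegLOne μ t x :=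
    (limsup_expPow_le_limsup_expPowOn_preimage_Icc hpos ht hμ htail hm).trans
      (limsup_expPowOn_preimage_Icc_le hpos ht hKG hh hCK m M)
  have hbandX : ⨆ x ∈ h ⁻¹' Icc (m : EReal) M, EReal.exp (h x) * expNegLOne μ t x ≤
      ⨆ x, EReal.exp (h x) * expNegLOne μ t x :=
    iSup₂_le fun x _ => le_iSup (fun x => EReal.exp (h x) * expNegLOne μ t x) x
  have hX : ⨆ x, EReal.exp (h x) * expNegLOne μ t x ≤ liminf (expPow μ t h) atTop :=
    iSup_le (exp_mul_expNegLOne_le_liminf hpos hh.lowerSemicontinuous)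
  have hll : liminf (expPow μ t h) atTop ≤ limsup (expPow μ t h) atTop := liminf_le_limsup
  exact ⟨le_antisymm hll (hband.trans (hbandX.trans hX)),
    le_antisymm hband (hbandX.trans (hX.trans hll)),
    le_antisymm (hband.trans hbandX) (hX.trans hll)⟩

end LimitBounds

lemma log_exp_mul_expNegLOne {μ : A → Measure X} {t : A → ℝ} (c : EReal) (x : X) :
    ENNReal.log (EReal.exp c * expNegLOne μ t x) = c - lOne μ t x := by
  rw [ENNReal.log_mul_add, EReal.log_exp, lOne, sub_eq_add_neg, neg_neg]
  rfl

theorem statement0_general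
    {X : Type*} [TopologicalSpace X] [LocallyCompactSpace X]
    [MeasurableSpace X] [BorelSpace X]
    {A : Type*} [Preorder A] [IsDirected A (· ≤ ·)] [Nonempty A]
    (μ : A → Measure X) (t : A → ℝ)
    (hSub : ∀ a, μ a Set.univ ≤ 1)
    (hpos : ∀ a, 0 < t a) (hto0 : Tendsto t atTop (𝓝 (0 : ℝ)))
    (T : Set (X → EReal))
    (hTcont : ∀ h ∈ T, Continuous h)
    -- (i) the tail condition
    (hTail : TailCondition μ t T)
    -- (ii) comparison of compact and open asymptotic measures
    (hKG : ∀ K G : Set X, IsCompact K → IsOpen G → K ⊆ G →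
      Filter.limsup (fun a => μ a K ^ (t a)) Filter.atTop ≤
        Filter.liminf (fun a => μ a G ^ (t a)) Filter.atTop)
    -- (iii) uniform lower bound on Λ̄
    (m : ℝ) (hm : ∀ h ∈ T, (m : EReal) < LambdaBar μ t h)
    -- T ⊆ C_K(X)
    (hCK : ∀ h ∈ T, ∀ x : X, ∀ ε : ℝ, 0 < ε → ENNReal.ofReal ε < EReal.exp (h x) →
      IsCompact {y : X | EReal.exp (h x) - ENNReal.ofReal ε ≤ EReal.exp (h y) ∧
        EReal.exp (h y) ≤ EReal.exp (h x) + ENNReal.ofReal ε}) :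
    (∀ h ∈ T, LambdaExists μ t h) ∧
    ∃ M : ℝ, ∀ h ∈ T,
      LambdaBar μ t h =
        (⨆ x ∈ {x : X | (m : EReal) ≤ h x ∧ h x ≤ (M : EReal)}, (h x - lOne μ t x)) ∧
      LambdaBar μ t h = ⨆ x : X, (h x - lOne μ t x) := by
  obtain ⟨M₀, hM₀⟩ := hTail (Real.exp m) (Real.exp_pos m)
  have htail : ∀ h ∈ T,
      limsup (expPowOn μ t h {x | ((max M₀ m : ℝ) : EReal) < h x}) atTop < EReal.exp m :=
    fun h hT => (limsup_le_limsup (.of_forall fun a => expPowOn_mono (hpos a).le fun x hx =>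
      (EReal.coe_le_coe_iff.2 (le_max_left M₀ m)).trans_lt hx)).trans_lt (hM₀ h hT)
  have hlimsup : ∀ h ∈ T, EReal.exp m < limsup (expPow μ t h) atTop := fun h hT => by
    simpa [LambdaBar] using EReal.exp_lt_exp_iff.2 (hm h hT)
  have key := fun h (hT : h ∈ T) => liminf_expPow_eq_limsup_eq_iSup hpos hto0 hSub hKG (hTcont h hT)
    (hCK h hT) (htail h hT) (hlimsup h hT)
  refine ⟨fun h hT => congrArg ENNReal.log (key h hT).1, max M₀ m, fun h hT => ⟨?_, ?_⟩⟩
  · simp only [LambdaBar, (key h hT).2.1, ENNReal.log_iSup, log_exp_mul_expNegLOne]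
    rfl
  · simp only [LambdaBar, (key h hT).2.2, ENNReal.log_iSup, log_exp_mul_expNegLOne]

/-- Theorem (compact case), part (a). -/
theorem statement0
    {X : Type*} [TopologicalSpace X] [T2Space X] [LocallyCompactSpace X]
    [MeasurableSpace X] [BorelSpace X]
    {A : Type*} [Preorder A] [IsDirected A (· ≤ ·)] [Nonempty A]
    (μ : A → Measure X) (t : A → ℝ)
    (hRadon : ∀ a, (μ a).InnerRegular) (hSub : ∀ a, μ a Set.univ ≤ 1)
    (hpos : ∀ a, 0 < t a) (hto0 : Tendsto t atTop (𝓝 (0 : ℝ)))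
    (T : Set (X → EReal))
    (hTcont : ∀ h ∈ T, Continuous h) (hTtop : ∀ h ∈ T, ∀ x, h x ≠ ⊤)
    -- (i) the tail condition
    (hTail : TailCondition μ t T)
    -- (ii) comparison of compact and open asymptotic measures
    (hKG : ∀ K G : Set X, IsCompact K → IsOpen G → K ⊆ G →
      Filter.limsup (fun a => μ a K ^ (t a)) Filter.atTop ≤
        Filter.liminf (fun a => μ a G ^ (t a)) Filter.atTop)
    -- (iii) uniform lower bound on Λ̄
    (m : ℝ) (hm : ∀ h ∈ T, (m : EReal) < LambdaBar μ t h)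
    -- T ⊆ C_K(X)
    (hCK : ∀ h ∈ T, ∀ x : X, ∀ ε : ℝ, 0 < ε → ENNReal.ofReal ε < EReal.exp (h x) →
      IsCompact {y : X | EReal.exp (h x) - ENNReal.ofReal ε ≤ EReal.exp (h y) ∧
        EReal.exp (h y) ≤ EReal.exp (h x) + ENNReal.ofReal ε}) :
    (∀ h ∈ T, LambdaExists μ t h) ∧
    ∃ M : ℝ, ∀ h ∈ T,
      LambdaBar μ t h =
        (⨆ x ∈ {x : X | (m : EReal) ≤ h x ∧ h x ≤ (M : EReal)}, (h x - lOne μ t x)) ∧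
      LambdaBar μ t h = ⨆ x : X, (h x - lOne μ t x) :=
  statement0_general μ t hSub hpos hto0 T hTcont hTail hKG m hm hCK

end
end

section
/- Assume that L(λ) exists and is finite for all λ in a nonempty open interval G ⊂ ℝ. Then the net (μ_α^{t_α}) has a subnet (μ_γ^{t_γ}) such that for every λ₀ ∈ G: l_1^{(γ)}((L|_G)'_-(λ₀)) ≤ λ₀·(L|_G)'_-(λ₀) − L(λ₀) and l_1^{(γ)}((L|_G)'_+(λ₀)) ≤ λ₀·(L|_G)'_+(λ₀) − L(λ₀), where l_1^{(γ)} denotes the function l_1 computed along the subnet (μ_γ^{t_γ}). Consequently l_1^{(γ)}(x) ≤ L|_G*(x) for all x ∈ ran (L|_G)'_- ∪ ran (L|_G)'_+. -/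
open Filter MeasureTheory Topology Set
open scoped ENNReal NNReal

noncomputable section

variable {X : Type*} [TopologicalSpace X] [MeasurableSpace X]
variable {A : Type*} [Preorder A]

/-- `l₁` along the net determined by the filter `F` on the index set. -/
noncomputable def lOneF {X : Type*} [TopologicalSpace X] [MeasurableSpace X]
    {B : Type*} (μ : B → Measure X) (t : B → ℝ) (F : Filter B) (x : X) : EReal :=
  - ENNReal.log (⨅ (G : Set X) (_ : IsOpen G) (_ : x ∈ G),
      Filter.liminf (fun b => μ b G ^ (t b)) F)

/-- The canonical (atTop-like) filter associated with a directed relation `r`. -/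
def netFilter {B : Type*} (r : B → B → Prop) : Filter B :=
  ⨅ b : B, Filter.principal {b' | r b b'}

universe u v

/-!
The subnet can be taken to be the net itself. Let `d` be a one-sided derivative of `L` at `λ₀`
and `U ∋ d` open. For `λ` near `λ₀` on that side, tilt `μ_α` by `e^{λ x / t_α}`. The slopes of
`L` between `λ₀`, `λ` and the mirror point `2λ - λ₀` tend to `d`, so the moments at `λ₀` and
`2λ - λ₀` make the tilted mass left of `d - δ` and right of `d + δ` exponentially smaller than
`e^{L(λ)/t_α}`. As `t_α → 0` the largest term of a sum dominates its `t_α`-th power, so the tilted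
mass sits in `(d - δ, d + δ)`, whence `liminf μ_α(U)^{t_α} ≥ e^{L(λ) - λ d - |λ| δ}`. Letting
`λ → λ₀` and `δ → 0` gives `l₁(d) ≤ λ₀ d - L(λ₀)`.
-/

def expR (c : ℝ) : ℝ≥0∞ := ENNReal.ofReal (Real.exp c)

lemma expR_add (a b : ℝ) : expR (a + b) = expR a * expR b := by
  rw [expR, expR, expR, Real.exp_add, ENNReal.ofReal_mul (Real.exp_pos a).le]

lemma expR_rpow (a s : ℝ) : expR a ^ s = expR (a * s) := by
  rw [expR, ENNReal.ofReal_rpow_of_pos (Real.exp_pos a), ← Real.exp_mul, expR]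

lemma expR_strictMono : StrictMono expR := fun _ _ h =>
  (ENNReal.ofReal_lt_ofReal_iff (Real.exp_pos _)).2 (Real.exp_lt_exp.2 h)

lemma expR_ne_zero (a : ℝ) : expR a ≠ 0 := by simp [expR, Real.exp_pos]

lemma expR_ne_top (a : ℝ) : expR a ≠ ∞ := ENNReal.ofReal_ne_top

lemma expR_zero : expR 0 = 1 := by simp [expR]

lemma continuous_expR : Continuous expR :=
  ENNReal.continuous_ofReal.comp Real.continuous_exp

lemma log_expR (c : ℝ) : ENNReal.log (expR c) = c := by
  rw [expR, ENNReal.log_ofReal_of_pos (Real.exp_pos c), Real.log_exp]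

lemma tendsto_two_rpow {ι : Type*} {F : Filter ι} {t : ι → ℝ} (ht0 : Tendsto t F (𝓝 0)) :
    Tendsto (fun i => (2 : ℝ≥0∞) ^ t i) F (𝓝 1) := by
  have h2 : (2 : ℝ≥0∞) = expR (Real.log 2) := by simp [expR, Real.exp_log]
  simp_rw [h2, expR_rpow, ← expR_zero]
  refine (continuous_expR.tendsto _).comp ?_
  simpa using ht0.const_mul (Real.log 2)

/-- Principle of the largest term: as `t → 0`, `(x + y)^t` is asymptotically `max(x^t, y^t)`. -/
lemma le_liminf_rpow_of_le_liminf_rpow_add {ι : Type*} {F : Filter ι} {t : ι → ℝ}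
    (ht : ∀ i, 0 ≤ t i) (ht0 : Tendsto t F (𝓝 0)) {x y : ι → ℝ≥0∞} {c : ℝ≥0∞}
    (hxy : c ≤ liminf (fun i => (x i + y i) ^ t i) F)
    (hy : limsup (fun i => y i ^ t i) F < c) :
    c ≤ liminf (fun i => x i ^ t i) F := by
  refine (le_liminf_iff).2 fun b hb => ?_
  obtain ⟨β, hbβ, hβc⟩ := exists_between (max_lt hb hy)
  obtain ⟨s, hβs, hsc⟩ := exists_between hβc
  have h2β : Tendsto (fun i => 2 ^ t i * β) F (𝓝 β) := by
    simpa using ENNReal.Tendsto.mul_const (tendsto_two_rpow ht0) (Or.inr hβc.ne_top)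
  filter_upwards [eventually_lt_of_lt_liminf (hsc.trans_le hxy),
    eventually_lt_of_limsup_lt ((le_max_right _ _).trans_lt hbβ),
    h2β.eventually (gt_mem_nhds hβs)] with i hs_lt hy_lt h2_lt
  by_contra! hx
  have hmax : max (x i) (y i) ^ t i ≤ β := by
    rw [(ENNReal.monotone_rpow_of_nonneg (ht i)).map_max]
    exact max_le (hx.trans ((le_max_left _ _).trans hbβ.le)) hy_lt.le
  have : (x i + y i) ^ t i ≤ 2 ^ t i * β :=
    calc (x i + y i) ^ t i ≤ (2 * max (x i) (y i)) ^ t i := by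
          refine ENNReal.rpow_le_rpow ?_ (ht i)
          rw [two_mul]
          exact add_le_add (le_max_left _ _) (le_max_right _ _)
      _ = 2 ^ t i * max (x i) (y i) ^ t i := ENNReal.mul_rpow_of_nonneg _ _ (ht i)
      _ ≤ 2 ^ t i * β := by gcongr
  exact (h2_lt.trans hs_lt).not_ge this

def expIntegral (μ : Measure ℝ) (l t : ℝ) : ℝ≥0∞ := ∫⁻ x, expR (l * x / t) ∂μ

lemma expIntegral_zero (μ : Measure ℝ) (t : ℝ) : expIntegral μ 0 t = μ univ := by
  simp [expIntegral, expR_zero]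

lemma expIntegral_mono {μ ν : Measure ℝ} (h : μ ≤ ν) (l t : ℝ) :
    expIntegral μ l t ≤ expIntegral ν l t :=
  lintegral_mono' h le_rfl

lemma expIntegral_add_measure (μ ν : Measure ℝ) (l t : ℝ) :
    expIntegral (μ + ν) l t = expIntegral μ l t + expIntegral ν l t :=
  lintegral_add_measure _ _ _

lemma expIntegral_restrict_rpow_le (μ : Measure ℝ) {s : Set ℝ} (hs : MeasurableSet s)
    {l l' c t : ℝ} (ht : 0 < t) (h : ∀ x ∈ s, (l - l') * x ≤ c) :
    expIntegral (μ.restrict s) l t ^ t ≤ expR c * expIntegral (μ.restrict s) l' t ^ t := by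
  have hint : expIntegral (μ.restrict s) l t ≤ expR (c / t) * expIntegral (μ.restrict s) l' t := by
    rw [expIntegral, expIntegral, ← lintegral_const_mul' _ _ (expR_ne_top _)]
    refine setLIntegral_mono' hs fun x hx => ?_
    rw [← expR_add, ← add_div]
    refine expR_strictMono.monotone (div_le_div_of_nonneg_right ?_ ht.le)
    linarith [h x hx]
  calc expIntegral (μ.restrict s) l t ^ t
      ≤ (expR (c / t) * expIntegral (μ.restrict s) l' t) ^ t := ENNReal.rpow_le_rpow hint ht.le
    _ = expR c * expIntegral (μ.restrict s) l' t ^ t := by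
      rw [ENNReal.mul_rpow_of_nonneg _ _ ht.le, expR_rpow, div_mul_cancel₀ _ ht.ne']

lemma limsup_expIntegral_restrict_rpow_le {ι : Type*} {F : Filter ι} [F.NeBot]
    (μ : ι → Measure ℝ) {t : ι → ℝ} (hpos : ∀ i, 0 < t i) {s : Set ℝ} (hs : MeasurableSet s)
    {l l' c c' : ℝ} (h : ∀ x ∈ s, (l - l') * x ≤ c)
    (hmom : Tendsto (fun i => expIntegral (μ i) l' (t i) ^ t i) F (𝓝 (expR c'))) :
    limsup (fun i => expIntegral ((μ i).restrict s) l (t i) ^ t i) F ≤ expR (c + c') := by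
  have hle : ∀ i, expIntegral ((μ i).restrict s) l (t i) ^ t i
      ≤ expR c * expIntegral (μ i) l' (t i) ^ t i := fun i =>
    (expIntegral_restrict_rpow_le (μ i) hs (hpos i) h).trans <|
      mul_le_mul_right
        (ENNReal.rpow_le_rpow (expIntegral_mono Measure.restrict_le_self _ _) (hpos i).le) _
  calc limsup (fun i => expIntegral ((μ i).restrict s) l (t i) ^ t i) F
      ≤ limsup (fun i => expR c * expIntegral (μ i) l' (t i) ^ t i) F :=
        limsup_le_limsup (Eventually.of_forall hle)
    _ = expR (c + c') := by
      rw [ENNReal.limsup_const_mul_of_ne_top (expR_ne_top c), hmom.limsup_eq, expR_add]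

lemma mul_add_lt_of_lt_slope {L : ℝ → ℝ} {a b e : ℝ} (hab : a < b) (h : e < slope L a b) :
    (b - a) * e + L a < L b := by
  rw [slope_def_field, lt_div_iff₀ (sub_pos.2 hab)] at h
  linarith

lemma mul_add_lt_of_slope_lt {L : ℝ → ℝ} {a b e : ℝ} (hab : a < b) (h : slope L a b < e) :
    (a - b) * e + L b < L a := by
  rw [slope_def_field, div_lt_iff₀ (sub_pos.2 hab)] at h
  linarith

lemma expIntegral_le_Ioo_add_Iic_add_Ici (μ : Measure ℝ) (l t d δ : ℝ) :
    expIntegral μ l t ≤ expIntegral (μ.restrict (Ioo (d - δ) (d + δ))) l t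
      + expIntegral (μ.restrict (Iic (d - δ))) l t
      + expIntegral (μ.restrict (Ici (d + δ))) l t := by
  have hcover : Ioo (d - δ) (d + δ) ∪ Iic (d - δ) ∪ Ici (d + δ) = univ := by
    refine eq_univ_of_forall fun x => ?_
    rcases le_or_gt x (d - δ) with hx | hx
    · exact Or.inl (Or.inr hx)
    rcases lt_or_ge x (d + δ) with hx' | hx'
    · exact Or.inl (Or.inl ⟨hx, hx'⟩)
    · exact Or.inr hx'
  have hμ : μ ≤ μ.restrict (Ioo (d - δ) (d + δ)) + μ.restrict (Iic (d - δ))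
      + μ.restrict (Ici (d + δ)) :=
    calc μ = μ.restrict (Ioo (d - δ) (d + δ) ∪ Iic (d - δ) ∪ Ici (d + δ)) := by
          rw [hcover, Measure.restrict_univ]
      _ ≤ _ := (Measure.restrict_union_le _ _).trans
          (add_le_add_left (Measure.restrict_union_le _ _) _)
  simpa only [expIntegral_add_measure] using expIntegral_mono hμ l t

lemma expIntegral_restrict_Ioo_rpow_le (μ : Measure ℝ) {l t : ℝ} (ht : 0 < t) (d δ : ℝ) :
    expIntegral (μ.restrict (Ioo (d - δ) (d + δ))) l t ^ t
      ≤ expR (l * d + |l| * δ) * μ (Ioo (d - δ) (d + δ)) ^ t := by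
  have h := expIntegral_restrict_rpow_le μ (s := Ioo (d - δ) (d + δ)) measurableSet_Ioo
    (l := l) (l' := 0) ht (c := l * d + |l| * δ) fun x hx => by
      have hx' : |x - d| ≤ δ := abs_sub_le_iff.2 ⟨by linarith [hx.2], by linarith [hx.1]⟩
      have : l * (x - d) ≤ |l| * δ := (le_abs_self _).trans <| by
        rw [abs_mul]
        exact mul_le_mul_of_nonneg_left hx' (abs_nonneg l)
      linarith
  rwa [expIntegral_zero, Measure.restrict_apply_univ] at h

lemma le_liminf_measure_Ioo_rpow {ι : Type*} {F : Filter ι} [F.NeBot] (μ : ι → Measure ℝ)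
    {t : ι → ℝ} (hpos : ∀ i, 0 < t i) (ht0 : Tendsto t F (𝓝 0)) {L : ℝ → ℝ}
    {la l lb d δ : ℝ} (hla : la < l) (hlb : l < lb)
    (hmoma : Tendsto (fun i => expIntegral (μ i) la (t i) ^ t i) F (𝓝 (expR (L la))))
    (hmom : Tendsto (fun i => expIntegral (μ i) l (t i) ^ t i) F (𝓝 (expR (L l))))
    (hmomb : Tendsto (fun i => expIntegral (μ i) lb (t i) ^ t i) F (𝓝 (expR (L lb))))
    (hleft : d - δ < slope L la l) (hright : slope L l lb < d + δ) :
    expR (L l - l * d - |l| * δ) ≤ liminf (fun i => μ i (Ioo (d - δ) (d + δ)) ^ t i) F := by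
  set S := Ioo (d - δ) (d + δ)
  set I : Set ℝ → ι → ℝ≥0∞ := fun s i => expIntegral ((μ i).restrict s) l (t i)
  have hpos' : ∀ i, 0 ≤ t i := fun i => (hpos i).le
  have hleft_tail : limsup (fun i => I (Iic (d - δ)) i ^ t i) F < expR (L l) := by
    refine (limsup_expIntegral_restrict_rpow_le μ hpos measurableSet_Iic
      (c := (l - la) * (d - δ)) (fun x hx => ?_) hmoma).trans_lt
      (expR_strictMono (mul_add_lt_of_lt_slope hla hleft))
    exact mul_le_mul_of_nonneg_left hx (sub_pos.2 hla).le
  have hright_tail : limsup (fun i => I (Ici (d + δ)) i ^ t i) F < expR (L l) := by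
    refine (limsup_expIntegral_restrict_rpow_le μ hpos measurableSet_Ici
      (c := (l - lb) * (d + δ)) (fun x hx => ?_) hmomb).trans_lt
      (expR_strictMono (mul_add_lt_of_slope_lt hlb hright))
    exact mul_le_mul_of_nonpos_left hx (sub_neg.2 hlb).le
  have hsum : expR (L l)
      ≤ liminf (fun i => (I S i + I (Iic (d - δ)) i + I (Ici (d + δ)) i) ^ t i) F :=
    hmom.liminf_eq.ge.trans (liminf_le_liminf (Eventually.of_forall fun i =>
      ENNReal.rpow_le_rpow (expIntegral_le_Ioo_add_Iic_add_Ici (μ i) l (t i) d δ) (hpos' i)))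
  have hmid : expR (L l) ≤ liminf (fun i => I S i ^ t i) F :=
    le_liminf_rpow_of_le_liminf_rpow_add hpos' ht0
      (le_liminf_rpow_of_le_liminf_rpow_add hpos' ht0 hsum hright_tail) hleft_tail
  have hcenter : expR (L l) ≤ expR (l * d + |l| * δ) * liminf (fun i => μ i S ^ t i) F :=
    hmid.trans <| (liminf_le_liminf (Eventually.of_forall fun i =>
      expIntegral_restrict_Ioo_rpow_le (μ i) (hpos i) d δ)).trans_eq
      (ENNReal.liminf_const_mul_of_ne_top (expR_ne_top _))
  rwa [← ENNReal.mul_le_mul_iff_right (expR_ne_zero (l * d + |l| * δ)) (expR_ne_top _),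
    sub_sub, ← expR_add, add_sub_cancel]

lemma slope_two_mul_sub (L : ℝ → ℝ) {l₀ l : ℝ} (hl : l ≠ l₀) :
    slope L l (2 * l - l₀) = 2 * slope L l₀ (2 * l - l₀) - slope L l₀ l := by
  have h : l - l₀ ≠ 0 := sub_ne_zero.2 hl
  rw [slope_def_field, slope_def_field, slope_def_field,
    show 2 * l - l₀ - l = l - l₀ by ring, show 2 * l - l₀ - l₀ = 2 * (l - l₀) by ring]
  field_simp
  ring

lemma tendsto_two_mul_sub_nhdsWithin {s : Set ℝ} {l₀ : ℝ} (hs : MapsTo (fun l => 2 * l - l₀) s s) :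
    Tendsto (fun l => 2 * l - l₀) (𝓝[s] l₀) (𝓝[s] l₀) :=
  tendsto_nhdsWithin_of_tendsto_nhds_of_eventually_within _
    ((by fun_prop : Continuous fun l : ℝ => 2 * l - l₀).tendsto' l₀ l₀ (by ring)
      |>.mono_left nhdsWithin_le_nhds)
    (eventually_nhdsWithin_of_forall hs)

lemma tendsto_slope_two_mul_sub {L : ℝ → ℝ} {s : Set ℝ} {l₀ d : ℝ} (hs₀ : l₀ ∉ s)
    (hs : MapsTo (fun l => 2 * l - l₀) s s) (hslope : Tendsto (slope L l₀) (𝓝[s] l₀) (𝓝 d)) :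
    Tendsto (fun l => slope L l (2 * l - l₀)) (𝓝[s] l₀) (𝓝 d) := by
  have h := ((hslope.comp (tendsto_two_mul_sub_nhdsWithin hs)).const_mul 2).sub hslope
  rw [show 2 * d - d = d by ring] at h
  refine h.congr' (eventually_nhdsWithin_of_forall fun l hl => ?_)
  exact (slope_two_mul_sub L fun (h : l = l₀) => hs₀ (h ▸ hl)).symm

lemma expR_le_liminf_measure_Ioo_of_hasDerivWithinAt {ι : Type*} {F : Filter ι} [F.NeBot]
    (μ : ι → Measure ℝ) {t : ι → ℝ} (hpos : ∀ i, 0 < t i) (ht0 : Tendsto t F (𝓝 0))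
    {L : ℝ → ℝ} {G : Set ℝ}
    (hmom : ∀ l ∈ G, Tendsto (fun i => expIntegral (μ i) l (t i) ^ t i) F (𝓝 (expR (L l))))
    {s : Set ℝ} {l₀ d δ : ℝ} (hG : G ∈ 𝓝 l₀) (hδ : 0 < δ) [(𝓝[s] l₀).NeBot] (hs₀ : l₀ ∉ s)
    (hs : MapsTo (fun l => 2 * l - l₀) s s) (hd : HasDerivWithinAt L d s l₀) :
    expR (L l₀ - l₀ * d - |l₀| * δ) ≤ liminf (fun i => μ i (Ioo (d - δ) (d + δ)) ^ t i) F := by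
  have hnhds : 𝓝[s] l₀ ≤ 𝓝 l₀ := nhdsWithin_le_nhds
  have hdouble := tendsto_two_mul_sub_nhdsWithin hs
  have hslope : Tendsto (slope L l₀) (𝓝[s] l₀) (𝓝 d) :=
    (hasDerivWithinAt_iff_tendsto_slope' hs₀).1 hd
  have hne : ∀ᶠ l in 𝓝[s] l₀, l ≠ l₀ :=
    eventually_nhdsWithin_of_forall fun l hl h => hs₀ (h ▸ hl)
  have hslope' := tendsto_slope_two_mul_sub hs₀ hs hslope
  have hbound : ∀ᶠ l in 𝓝[s] l₀,
      expR (L l - l * d - |l| * δ) ≤ liminf (fun i => μ i (Ioo (d - δ) (d + δ)) ^ t i) F := by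
    have hIoo : Ioo (d - δ) (d + δ) ∈ 𝓝 d := Ioo_mem_nhds (by linarith) (by linarith)
    filter_upwards [hne, hnhds hG, hdouble.eventually (hnhds hG), hslope.eventually hIoo,
      hslope'.eventually hIoo] with l hne hl hl' hsl hsl'
    have hl₀ := mem_of_mem_nhds hG
    rcases hne.lt_or_gt with hlt | hgt
    · rw [slope_comm] at hsl hsl'
      exact le_liminf_measure_Ioo_rpow μ hpos ht0 (by linarith) hlt (hmom _ hl') (hmom _ hl)
        (hmom _ hl₀) hsl'.1 hsl.2
    · exact le_liminf_measure_Ioo_rpow μ hpos ht0 hgt (by linarith) (hmom _ hl₀) (hmom _ hl)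
        (hmom _ hl') hsl.1 hsl'.2
  have hL : Tendsto L (𝓝[s] l₀) (𝓝 (L l₀)) := hd.continuousWithinAt.tendsto
  have hid : Tendsto id (𝓝[s] l₀) (𝓝 l₀) := tendsto_id.mono_left hnhds
  refine le_of_tendsto ?_ hbound
  exact (continuous_expR.tendsto _).comp
    ((hL.sub (hid.mul_const d)).sub ((continuous_abs.tendsto l₀).comp hid |>.mul_const δ))

lemma expR_le_liminf_measure_of_forall_Ioo {ι : Type*} {F : Filter ι} (μ : ι → Measure ℝ)
    {t : ι → ℝ} (ht : ∀ i, 0 ≤ t i) {c k d : ℝ} {U : Set ℝ} (hU : U ∈ 𝓝 d)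
    (h : ∀ δ > 0, expR (c - k * δ) ≤ liminf (fun i => μ i (Ioo (d - δ) (d + δ)) ^ t i) F) :
    expR c ≤ liminf (fun i => μ i U ^ t i) F := by
  obtain ⟨ε, hε, hball⟩ := Metric.mem_nhds_iff.1 hU
  have hlim : Tendsto (fun δ => expR (c - k * δ)) (𝓝[>] 0) (𝓝 (expR c)) :=
    ((continuous_expR.comp (continuous_const.sub (continuous_const.mul continuous_id))).tendsto' 0
      _ (by simp)).mono_left nhdsWithin_le_nhds
  refine le_of_tendsto hlim ?_
  filter_upwards [Ioo_mem_nhdsGT hε] with δ hδ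
  refine (h δ hδ.1).trans (liminf_le_liminf (Eventually.of_forall fun i =>
    ENNReal.rpow_le_rpow (measure_mono ?_) (ht i)))
  rw [← Real.ball_eq_Ioo]
  exact (Metric.ball_subset_ball hδ.2.le).trans hball

lemma lOneF_le_of_forall_isOpen {X B : Type*} [TopologicalSpace X] [MeasurableSpace X]
    (μ : B → Measure X) (t : B → ℝ) (F : Filter B) {x : X} {c : ℝ}
    (h : ∀ U, IsOpen U → x ∈ U → expR (-c) ≤ liminf (fun b => μ b U ^ t b) F) :
    lOneF μ t F x ≤ c := by
  have hlog := ENNReal.log_monotone (le_iInf fun U => le_iInf fun hU => le_iInf fun hx => h U hU hx)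
  rw [log_expR] at hlog
  rw [lOneF, EReal.neg_le, ← EReal.coe_neg]
  exact hlog

lemma lOneF_le_of_hasDerivWithinAt {ι : Type*} {F : Filter ι} [F.NeBot]
    (μ : ι → Measure ℝ) {t : ι → ℝ} (hpos : ∀ i, 0 < t i) (ht0 : Tendsto t F (𝓝 0))
    {L : ℝ → ℝ} {G : Set ℝ}
    (hmom : ∀ l ∈ G, Tendsto (fun i => expIntegral (μ i) l (t i) ^ t i) F (𝓝 (expR (L l))))
    {s : Set ℝ} {l₀ d : ℝ} (hG : G ∈ 𝓝 l₀) [(𝓝[s] l₀).NeBot] (hs₀ : l₀ ∉ s)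
    (hs : MapsTo (fun l => 2 * l - l₀) s s) (hd : HasDerivWithinAt L d s l₀) :
    lOneF μ t F d ≤ ((l₀ * d - L l₀ : ℝ) : EReal) := by
  refine lOneF_le_of_forall_isOpen μ t F fun U hU hdU => ?_
  rw [neg_sub]
  exact expR_le_liminf_measure_of_forall_Ioo μ (fun i => (hpos i).le) (hU.mem_nhds hdU)
    fun δ hδ => expR_le_liminf_measure_Ioo_of_hasDerivWithinAt μ hpos ht0 hmom hG hδ hs₀ hs hd

lemma tendsto_expIntegral_rpow_of_lambdaExists {ι : Type*} [Preorder ι] (μ : ι → Measure ℝ)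
    (t : ι → ℝ) {l c : ℝ} (hex : LambdaExists μ t (hlin l)) (hbar : LambdaBar μ t (hlin l) = c) :
    Tendsto (fun i => expIntegral (μ i) l (t i) ^ t i) atTop (𝓝 (expR c)) := by
  have hfun : expPow μ t (hlin l) = fun i => expIntegral (μ i) l (t i) ^ t i := by
    funext i
    refine congrArg (· ^ t i) (lintegral_congr fun x => ?_)
    rw [hlin, ← EReal.coe_mul, EReal.exp_coe, expR, div_eq_inv_mul]
  have hlimsup : limsup (expPow μ t (hlin l)) atTop = expR c := by
    rw [← ENNReal.exp_log (limsup _ _), ← LambdaBar, hbar, EReal.exp_coe, expR]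
  have hliminf : liminf (expPow μ t (hlin l)) atTop = expR c := by
    rw [← ENNReal.exp_log (liminf _ _), ← LambdaUnder, hex, LambdaBar, ENNReal.exp_log, hlimsup]
  rw [← hfun]
  exact tendsto_of_liminf_eq_limsup hliminf hlimsup

theorem statement4_general
    {A : Type u} [Preorder A] [IsDirected A (· ≤ ·)] [Nonempty A]
    (μ : A → Measure ℝ) (t : A → ℝ)
    (hpos : ∀ a, 0 < t a) (hto0 : Tendsto t atTop (𝓝 (0 : ℝ)))
    (G : Set ℝ) (hGopen : IsOpen G)
    (L : ℝ → ℝ)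
    (hL : ∀ l ∈ G, LambdaExists μ t (hlin l) ∧ LambdaBar μ t (hlin l) = ((L l : ℝ) : EReal)) :
    ∃ (B : Type u) (r : B → B → Prop) (φ : B → A),
      Nonempty B ∧ Reflexive r ∧ Transitive r ∧
      (∀ b₁ b₂ : B, ∃ b₃ : B, r b₁ b₃ ∧ r b₂ b₃) ∧
      (∀ b₁ b₂ : B, r b₁ b₂ → φ b₁ ≤ φ b₂) ∧
      (∀ a : A, ∃ b : B, a ≤ φ b) ∧
      (∀ l₀ ∈ G, ∀ d : ℝ,
        (HasDerivWithinAt L d (Set.Iio l₀) l₀ →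
          lOneF (μ ∘ φ) (t ∘ φ) (netFilter r) d ≤ ((l₀ * d - L l₀ : ℝ) : EReal)) ∧
        (HasDerivWithinAt L d (Set.Ioi l₀) l₀ →
          lOneF (μ ∘ φ) (t ∘ φ) (netFilter r) d ≤ ((l₀ * d - L l₀ : ℝ) : EReal))) ∧
      (∀ d ∈ ranLR L G, lOneF (μ ∘ φ) (t ∘ φ) (netFilter r) d ≤ LegG L G d) := by
  have hmom : ∀ l ∈ G, Tendsto (fun a => expIntegral (μ a) l (t a) ^ t a) atTop (𝓝 (expR (L l))) :=
    fun l hl => tendsto_expIntegral_rpow_of_lambdaExists μ t (hL l hl).1 (hL l hl).2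
  have hleft : ∀ l₀ ∈ G, ∀ d, HasDerivWithinAt L d (Iio l₀) l₀ →
      lOneF μ t atTop d ≤ ((l₀ * d - L l₀ : ℝ) : EReal) := fun l₀ hl₀ d hd =>
    lOneF_le_of_hasDerivWithinAt μ hpos hto0 hmom (s := Iio l₀) (hGopen.mem_nhds hl₀)
      (lt_irrefl l₀) (fun l (hl : l < l₀) => show 2 * l - l₀ < l₀ by linarith) hd
  have hright : ∀ l₀ ∈ G, ∀ d, HasDerivWithinAt L d (Ioi l₀) l₀ →
      lOneF μ t atTop d ≤ ((l₀ * d - L l₀ : ℝ) : EReal) := fun l₀ hl₀ d hd =>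
    lOneF_le_of_hasDerivWithinAt μ hpos hto0 hmom (s := Ioi l₀) (hGopen.mem_nhds hl₀)
      (lt_irrefl l₀) (fun l (hl : l₀ < l) => show l₀ < 2 * l - l₀ by linarith) hd
  refine ⟨A, (· ≤ ·), id, inferInstance, le_refl, fun _ _ _ => le_trans, exists_ge_ge,
    fun _ _ => id, fun a => ⟨a, le_rfl⟩, fun l₀ hl₀ d => ⟨hleft l₀ hl₀ d, hright l₀ hl₀ d⟩, ?_⟩
  rintro d ⟨l₀, hl₀, hd⟩
  refine le_trans ?_ (le_iSup₂ (f := fun l (_ : l ∈ G) => ((l * d - L l : ℝ) : EReal)) l₀ hl₀)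
  exact hd.elim (hleft l₀ hl₀ d) (hright l₀ hl₀ d)

/-- Proposition `lem-x+`: existence of a subnet along which `l₁` is dominated by
`λ₀ x − L(λ₀)` at the one-sided derivatives of `L|_G`, hence by `L|_G^*` on their ranges. -/
theorem statement4
    {A : Type u} [Preorder A] [IsDirected A (· ≤ ·)] [Nonempty A]
    (μ : A → Measure ℝ) (t : A → ℝ)
    (hRadon : ∀ a, (μ a).InnerRegular) (hSub : ∀ a, μ a Set.univ ≤ 1)
    (hpos : ∀ a, 0 < t a) (hto0 : Tendsto t atTop (𝓝 (0 : ℝ)))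
    (G : Set ℝ) (hGopen : IsOpen G) (hGint : G.OrdConnected) (hGne : G.Nonempty)
    (L : ℝ → ℝ)
    (hL : ∀ l ∈ G, LambdaExists μ t (hlin l) ∧ LambdaBar μ t (hlin l) = ((L l : ℝ) : EReal)) :
    ∃ (B : Type u) (r : B → B → Prop) (φ : B → A),
      Nonempty B ∧ Reflexive r ∧ Transitive r ∧
      (∀ b₁ b₂ : B, ∃ b₃ : B, r b₁ b₃ ∧ r b₂ b₃) ∧
      (∀ b₁ b₂ : B, r b₁ b₂ → φ b₁ ≤ φ b₂) ∧
      (∀ a : A, ∃ b : B, a ≤ φ b) ∧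
      (∀ l₀ ∈ G, ∀ d : ℝ,
        (HasDerivWithinAt L d (Set.Iio l₀) l₀ →
          lOneF (μ ∘ φ) (t ∘ φ) (netFilter r) d ≤ ((l₀ * d - L l₀ : ℝ) : EReal)) ∧
        (HasDerivWithinAt L d (Set.Ioi l₀) l₀ →
          lOneF (μ ∘ φ) (t ∘ φ) (netFilter r) d ≤ ((l₀ * d - L l₀ : ℝ) : EReal))) ∧
      (∀ d ∈ ranLR L G, lOneF (μ ∘ φ) (t ∘ φ) (netFilter r) d ≤ LegG L G d) :=
  statement4_general μ t hpos hto0 G hGopen L hL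
end
end

section
/- Let G ⊂ ℝ be a nonempty open interval and S a set of continuous functions h : ℝ → [-∞,∞) with S ⊇ {h_λ : λ ∈ G}; assume Λ(h) exists for all h ∈ S and L(λ) is finite for all λ ∈ G. If ran (L|_G)'_- ∪ ran (L|_G)'_+ ⊇ Dom(l_0) ∩ {x : l_1(x) > −Λ̄(0)} (where Λ̄(0) = log limsup_α μ_α(ℝ)^{t_α}), then (μ_α) satisfies a vague large deviation principle with powers (t_α) whose rate function J satisfies J(x) = L|_G*(x) = Λ|_S*(x) for all x ∈ Dom(J) ∩ {x : J(x) > −Λ̄(0)}. If moreover 0 ∈ G, the principle is narrow and J(x) = L|_G*(x) = Λ|_S*(x) for all x ∈ Dom(J). -/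
open Filter MeasureTheory Topology Set
open scoped ENNReal NNReal

noncomputable section

variable {X : Type*} [TopologicalSpace X] [MeasurableSpace X]
variable {A : Type*} [Preorder A]

set_option linter.unusedSectionVars false

/-!
The rate function is `l₁`. Chebyshev's inequality gives `l₀(x) ≥ λx - L(λ)` for every `λ ∈ G`.
If `x` is a one-sided derivative of `L` at `λ`, split `∫ e^{(λ+θ)y/t_α} dμ_α` at `|y - x| < δ`:
off that interval the integrand is dominated by multiples of the integrands for `λ` and `λ + 2θ`,
whose rates stay strictly below `L(λ + θ)` for small `θ` of the right sign, so the mass near `x`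
carries the rate and `l₁(x) ≤ λx - L(λ)`. Thus `l₀ = l₁` wherever the range hypothesis applies;
elsewhere `l₀ = ∞` or `l₁ ≤ -Λ̄(0) ≤ l₀`. As `2^{t_α} → 1`, the `limsup` of `μ_α(s ∪ s')^{t_α}`
is the larger of the two, so a finite cover turns `l₀ ≥ l₁` into the upper bound on compact sets;
for `0 ∈ G`, Chebyshev at `±r ∈ G` gives exponential tightness and the bound on closed sets.
Finally `L|_G^* ≤ Λ|_S^* ≤ l₁`, the second inequality being Varadhan's lower bound
`h(x) - l₁(x) ≤ Λ(h)`, while the exposed points satisfy `l₁ ≤ L|_G^*`.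
-/

namespace LDP

section NeighbourhoodRates

variable (μ : A → Measure X) (t : A → ℝ)

def limsupPow (s : Set X) : ℝ≥0∞ := limsup (fun a => μ a s ^ t a) atTop

def liminfPow (s : Set X) : ℝ≥0∞ := liminf (fun a => μ a s ^ t a) atTop

def nhdsLimsupPow (x : X) : ℝ≥0∞ := ⨅ (H : Set X) (_ : IsOpen H) (_ : x ∈ H), limsupPow μ t H

def nhdsLiminfPow (x : X) : ℝ≥0∞ := ⨅ (H : Set X) (_ : IsOpen H) (_ : x ∈ H), liminfPow μ t H

variable {μ t}

lemma lOne_eq (x : X) : lOne μ t x = -ENNReal.log (nhdsLiminfPow μ t x) := rfl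

lemma lZero_eq (x : X) : lZero μ t x = -ENNReal.log (nhdsLimsupPow μ t x) := rfl

lemma lOne_ne_top_iff {x : X} : lOne μ t x ≠ ⊤ ↔ nhdsLiminfPow μ t x ≠ 0 := by
  rw [lOne_eq, Ne, EReal.neg_eq_top_iff, ENNReal.log_eq_bot_iff]

lemma lZero_ne_top_iff {x : X} : lZero μ t x ≠ ⊤ ↔ nhdsLimsupPow μ t x ≠ 0 := by
  rw [lZero_eq, Ne, EReal.neg_eq_top_iff, ENNReal.log_eq_bot_iff]

lemma nhdsLimsupPow_le {x : X} {H : Set X} (hH : IsOpen H) (hx : x ∈ H) :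
    nhdsLimsupPow μ t x ≤ limsupPow μ t H :=
  iInf₂_le_of_le H hH (iInf_le _ hx)

lemma nhdsLiminfPow_le {x : X} {H : Set X} (hH : IsOpen H) (hx : x ∈ H) :
    nhdsLiminfPow μ t x ≤ liminfPow μ t H :=
  iInf₂_le_of_le H hH (iInf_le _ hx)

lemma nhdsLimsupPow_lt_iff {x : X} {b : ℝ≥0∞} :
    nhdsLimsupPow μ t x < b ↔ ∃ H, IsOpen H ∧ x ∈ H ∧ limsupPow μ t H < b := by
  simp only [nhdsLimsupPow, iInf_lt_iff, exists_prop]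

lemma nhdsLiminfPow_lt_iff {x : X} {b : ℝ≥0∞} :
    nhdsLiminfPow μ t x < b ↔ ∃ H, IsOpen H ∧ x ∈ H ∧ liminfPow μ t H < b := by
  simp only [nhdsLiminfPow, iInf_lt_iff, exists_prop]

lemma upperSemicontinuous_nhdsLiminfPow : UpperSemicontinuous (nhdsLiminfPow μ t) := by
  intro x b hb
  obtain ⟨H, hH, hxH, hHb⟩ := nhdsLiminfPow_lt_iff.mp hb
  filter_upwards [hH.mem_nhds hxH] with y hy using (nhdsLiminfPow_le hH hy).trans_lt hHb

lemma limsupPow_mono (hpos : ∀ a, 0 < t a) : Monotone (limsupPow μ t) := fun _ _ h =>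
  limsup_le_limsup (Eventually.of_forall fun a => ENNReal.rpow_le_rpow (measure_mono h) (hpos a).le)

lemma liminfPow_mono (hpos : ∀ a, 0 < t a) : Monotone (liminfPow μ t) := fun _ _ h =>
  liminf_le_liminf (Eventually.of_forall fun a => ENNReal.rpow_le_rpow (measure_mono h) (hpos a).le)

lemma limsupPow_le_one (hpos : ∀ a, 0 < t a) (hSub : ∀ a, μ a univ ≤ 1) (s : Set X) :
    limsupPow μ t s ≤ 1 :=
  limsup_le_of_le (by isBoundedDefault) (Eventually.of_forall fun a =>
    ENNReal.rpow_le_one ((measure_mono (subset_univ s)).trans (hSub a)) (hpos a).le)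

lemma nhdsLimsupPow_le_limsupPow_univ (x : X) : nhdsLimsupPow μ t x ≤ limsupPow μ t univ :=
  nhdsLimsupPow_le isOpen_univ (mem_univ x)

variable [IsDirected A (· ≤ ·)] [Nonempty A]

lemma nhdsLiminfPow_le_nhdsLimsupPow (x : X) : nhdsLiminfPow μ t x ≤ nhdsLimsupPow μ t x :=
  le_iInf₂ fun H hH => le_iInf fun hx => (nhdsLiminfPow_le hH hx).trans liminf_le_limsup

lemma nhdsLiminfPow_le_one (hpos : ∀ a, 0 < t a) (hSub : ∀ a, μ a univ ≤ 1) (x : X) :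
    nhdsLiminfPow μ t x ≤ 1 :=
  (nhdsLiminfPow_le_nhdsLimsupPow x).trans <|
    (nhdsLimsupPow_le_limsupPow_univ x).trans (limsupPow_le_one hpos hSub univ)

lemma tendsto_const_rpow_of_tendsto_zero {c : ℝ≥0∞} (hc0 : c ≠ 0) (hc : c ≠ ⊤)
    (hto0 : Tendsto t atTop (𝓝 0)) :
    Tendsto (fun a => c ^ t a) atTop (𝓝 1) := by
  have hc' : 0 < c.toReal := ENNReal.toReal_pos hc0 hc
  have key : Tendsto (fun a => ENNReal.ofReal (c.toReal ^ t a)) atTop (𝓝 1) := by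
    simpa [Function.comp_def] using (ENNReal.continuous_ofReal.tendsto _).comp
      ((Real.continuousAt_const_rpow hc'.ne').tendsto.comp hto0)
  refine key.congr fun a => ?_
  rw [← ENNReal.ofReal_rpow_of_pos hc', ENNReal.ofReal_toReal hc]

lemma limsupPow_union_le (hpos : ∀ a, 0 < t a) (hto0 : Tendsto t atTop (𝓝 0)) (s s' : Set X) :
    limsupPow μ t (s ∪ s') ≤ max (limsupPow μ t s) (limsupPow μ t s') := by
  have hle : ∀ a, μ a (s ∪ s') ^ t a ≤ 2 ^ t a * max (μ a s ^ t a) (μ a s' ^ t a) := fun a =>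
    calc μ a (s ∪ s') ^ t a ≤ (2 * max (μ a s) (μ a s')) ^ t a := by
          refine ENNReal.rpow_le_rpow ((measure_union_le s s').trans ?_) (hpos a).le
          rw [two_mul]
          exact add_le_add (le_max_left _ _) (le_max_right _ _)
      _ = 2 ^ t a * max (μ a s ^ t a) (μ a s' ^ t a) := by
          rw [ENNReal.mul_rpow_of_nonneg _ _ (hpos a).le,
            (ENNReal.monotone_rpow_of_nonneg (hpos a).le).map_max]
  have h2 : Tendsto (fun a => (2 : ℝ≥0∞) ^ t a) atTop (𝓝 1) :=
    tendsto_const_rpow_of_tendsto_zero two_ne_zero ENNReal.ofNat_ne_top hto0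
  calc limsupPow μ t (s ∪ s')
      ≤ limsup ((fun a => (2 : ℝ≥0∞) ^ t a) * fun a => max (μ a s ^ t a) (μ a s' ^ t a)) atTop :=
        limsup_le_limsup (Eventually.of_forall hle)
    _ ≤ limsup (fun a => (2 : ℝ≥0∞) ^ t a) atTop *
          limsup (fun a => max (μ a s ^ t a) (μ a s' ^ t a)) atTop :=
        ENNReal.limsup_mul_le' (by simp [h2.limsup_eq]) (by simp [h2.limsup_eq])
    _ = max (limsupPow μ t s) (limsupPow μ t s') := by
        rw [h2.limsup_eq, one_mul, limsup_max]
        rfl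

lemma limsupPow_biUnion_le {ι : Type*} (hpos : ∀ a, 0 < t a) (hto0 : Tendsto t atTop (𝓝 0))
    (s : Finset ι) (H : ι → Set X) :
    limsupPow μ t (⋃ i ∈ s, H i) ≤ s.sup fun i => limsupPow μ t (H i) := by
  classical
  induction s using Finset.induction_on with
  | empty => simp [limsupPow, ENNReal.zero_rpow_of_pos (hpos _)]
  | insert j s _ ih =>
    rw [Finset.set_biUnion_insert, Finset.sup_insert]
    exact (limsupPow_union_le hpos hto0 _ _).trans (max_le_max le_rfl ih)

lemma limsupPow_le_iSup_of_isCompact (hpos : ∀ a, 0 < t a) (hto0 : Tendsto t atTop (𝓝 0))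
    {K : Set X} (hK : IsCompact K) :
    limsupPow μ t K ≤ ⨆ x ∈ K, nhdsLimsupPow μ t x := by
  refine le_of_forall_gt fun b hb => ?_
  have hloc : ∀ x ∈ K, ∃ H, IsOpen H ∧ x ∈ H ∧ limsupPow μ t H < b := fun x hx =>
    nhdsLimsupPow_lt_iff.mp <|
      (le_iSup₂ (f := fun y (_ : y ∈ K) => nhdsLimsupPow μ t y) x hx).trans_lt hb
  choose! H hHo hxH hHb using hloc
  obtain ⟨s, hsK, hKs⟩ := hK.elim_nhds_subcover H fun x hx => (hHo x hx).mem_nhds (hxH x hx)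
  calc limsupPow μ t K ≤ limsupPow μ t (⋃ x ∈ s, H x) := limsupPow_mono hpos hKs
    _ ≤ s.sup fun x => limsupPow μ t (H x) := limsupPow_biUnion_le hpos hto0 s H
    _ < b := (Finset.sup_lt_iff (bot_lt_iff_ne_bot.mpr (ne_bot_of_gt hb))).mpr
        fun x hx => hHb x (hsK x hx)

lemma limsupPow_le_iSup_of_isClosed (hpos : ∀ a, 0 < t a) (hto0 : Tendsto t atTop (𝓝 0))
    (htight : ExpTight μ t) {F : Set X} (hF : IsClosed F) :
    limsupPow μ t F ≤ ⨆ x ∈ F, nhdsLimsupPow μ t x := by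
  refine ENNReal.le_of_forall_pos_le_add fun ε hε _ => ?_
  obtain ⟨K, hK, hKc⟩ := htight ε (by exact_mod_cast hε)
  have hFK : limsupPow μ t (F ∩ K) ≤ ⨆ x ∈ F, nhdsLimsupPow μ t x :=
    (limsupPow_le_iSup_of_isCompact hpos hto0 (hK.inter_left hF)).trans
      (biSup_mono fun _ hx => hx.1)
  calc limsupPow μ t F ≤ limsupPow μ t ((F ∩ K) ∪ Kᶜ) :=
        limsupPow_mono hpos fun x hx => (em (x ∈ K)).elim (fun h => Or.inl ⟨hx, h⟩) Or.inr
    _ ≤ max (limsupPow μ t (F ∩ K)) (limsupPow μ t Kᶜ) := limsupPow_union_le hpos hto0 _ _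
    _ ≤ (⨆ x ∈ F, nhdsLimsupPow μ t x) + ε := by
        rw [ENNReal.ofReal_coe_nnreal] at hKc
        exact max_le (hFK.trans le_self_add) (hKc.le.trans le_add_self)

end NeighbourhoodRates

section ExpMoments

lemma ofReal_exp_le_of_forall_lt {b : ℝ≥0∞} {c : ℝ}
    (h : ∀ c' < c, ENNReal.ofReal (Real.exp c') ≤ b) : ENNReal.ofReal (Real.exp c) ≤ b :=
  le_of_tendsto (ENNReal.continuous_ofReal.comp Real.continuous_exp).continuousWithinAt.tendsto
    (eventually_nhdsWithin_of_forall (s := Iio c) h)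

lemma le_ofReal_exp_of_forall_gt {a : ℝ≥0∞} {c : ℝ}
    (h : ∀ c', c < c' → a ≤ ENNReal.ofReal (Real.exp c')) : a ≤ ENNReal.ofReal (Real.exp c) :=
  ge_of_tendsto (ENNReal.continuous_ofReal.comp Real.continuous_exp).continuousWithinAt.tendsto
    (eventually_nhdsWithin_of_forall (s := Ioi c) h)

lemma ofReal_exp_add (a b : ℝ) :
    ENNReal.ofReal (Real.exp (a + b)) =
      ENNReal.ofReal (Real.exp a) * ENNReal.ofReal (Real.exp b) := by
  rw [Real.exp_add, ENNReal.ofReal_mul (Real.exp_pos a).le]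

lemma ofReal_exp_mul_rpow {T : ℝ} (hT : 0 < T) (q : ℝ) (Z : ℝ≥0∞) :
    (ENNReal.ofReal (Real.exp (T⁻¹ * q)) * Z) ^ T = ENNReal.ofReal (Real.exp q) * Z ^ T := by
  rw [ENNReal.mul_rpow_of_nonneg _ _ hT.le, ENNReal.ofReal_rpow_of_pos (Real.exp_pos _),
    ← Real.exp_mul, mul_right_comm, inv_mul_cancel₀ hT.ne', one_mul]

lemma le_ofReal_exp_sub_iff {b c : ℝ} {z : ℝ≥0∞} :
    z ≤ ENNReal.ofReal (Real.exp (c - b)) ↔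
      ENNReal.ofReal (Real.exp b) * z ≤ ENNReal.ofReal (Real.exp c) := by
  rw [← ENNReal.mul_le_mul_iff_right (ENNReal.ofReal_pos.mpr (Real.exp_pos b)).ne'
    ENNReal.ofReal_ne_top, ← ofReal_exp_add, add_sub_cancel]

lemma ofReal_exp_sub_le_iff {b c : ℝ} {z : ℝ≥0∞} :
    ENNReal.ofReal (Real.exp (c - b)) ≤ z ↔
      ENNReal.ofReal (Real.exp c) ≤ ENNReal.ofReal (Real.exp b) * z := by
  rw [← ENNReal.mul_le_mul_iff_right (ENNReal.ofReal_pos.mpr (Real.exp_pos b)).ne'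
    ENNReal.ofReal_ne_top, ← ofReal_exp_add, add_sub_cancel]

variable {μ : A → Measure X} {t : A → ℝ}

lemma limsup_expPow_eq {h : X → EReal} {c : ℝ} (hc : LambdaBar μ t h = c) :
    limsup (expPow μ t h) atTop = ENNReal.ofReal (Real.exp c) := by
  rw [← EReal.exp_coe, ← hc, LambdaBar, ENNReal.exp_log]

lemma tendsto_expPow {h : X → EReal} {c : ℝ} (hex : LambdaExists μ t h)
    (hc : LambdaBar μ t h = c) :
    Tendsto (expPow μ t h) atTop (𝓝 (ENNReal.ofReal (Real.exp c))) := by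
  have hlim : liminf (expPow μ t h) atTop = limsup (expPow μ t h) atTop :=
    ENNReal.log_injective hex
  exact tendsto_of_liminf_eq_limsup (hlim.trans (limsup_expPow_eq hc)) (limsup_expPow_eq hc)

lemma expPow_zero (a : A) : expPow μ t (fun _ => 0) a = μ a univ ^ t a := by
  simp [expPow]

lemma lambdaBar_zero : LambdaBar μ t (fun _ => 0) = ENNReal.log (limsupPow μ t univ) := by
  rw [LambdaBar, limsupPow, show expPow μ t (fun _ => 0) = _ from funext expPow_zero]

end ExpMoments

section Chebyshev

variable {μ : A → Measure ℝ} {t : A → ℝ}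

lemma expPow_hlin (l : ℝ) (a : A) :
    expPow μ t (hlin l) a = (∫⁻ y, ENNReal.ofReal (Real.exp ((t a)⁻¹ * (l * y))) ∂μ a) ^ t a :=
  rfl

lemma hlin_zero : hlin 0 = fun _ => (0 : EReal) := funext fun x => by simp [hlin]

lemma ofReal_exp_mul_limsupPow_le (hpos : ∀ a, 0 < t a) {l b : ℝ} {s : Set ℝ}
    (hs : MeasurableSet s) (hb : ∀ y ∈ s, b ≤ l * y) :
    ENNReal.ofReal (Real.exp b) * limsupPow μ t s ≤ limsup (expPow μ t (hlin l)) atTop := by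
  rw [limsupPow, ← ENNReal.limsup_const_mul_of_ne_top ENNReal.ofReal_ne_top]
  refine limsup_le_limsup (Eventually.of_forall fun a => ?_)
  have hint : ENNReal.ofReal (Real.exp ((t a)⁻¹ * b)) * μ a s
      ≤ ∫⁻ y, ENNReal.ofReal (Real.exp ((t a)⁻¹ * (l * y))) ∂μ a := by
    rw [← setLIntegral_const]
    refine (setLIntegral_mono' hs fun y hy => ?_).trans (setLIntegral_le_lintegral _ _)
    exact ENNReal.ofReal_le_ofReal (Real.exp_le_exp.mpr
      (mul_le_mul_of_nonneg_left (hb y hy) (inv_pos.mpr (hpos a)).le))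
  show ENNReal.ofReal (Real.exp b) * μ a s ^ t a ≤ _
  rw [expPow_hlin, ← ofReal_exp_mul_rpow (hpos a)]
  exact ENNReal.rpow_le_rpow hint (hpos a).le

lemma limsupPow_le_of_le_mul (hpos : ∀ a, 0 < t a) {L : ℝ → ℝ} {l b : ℝ}
    (hL : LambdaBar μ t (hlin l) = L l) {s : Set ℝ} (hs : MeasurableSet s)
    (hb : ∀ y ∈ s, b ≤ l * y) :
    limsupPow μ t s ≤ ENNReal.ofReal (Real.exp (L l - b)) := by
  rw [le_ofReal_exp_sub_iff, ← limsup_expPow_eq hL]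
  exact ofReal_exp_mul_limsupPow_le hpos hs hb

lemma nhdsLimsupPow_le_exp (hpos : ∀ a, 0 < t a) {L : ℝ → ℝ} {l : ℝ}
    (hL : LambdaBar μ t (hlin l) = L l) (x : ℝ) :
    nhdsLimsupPow μ t x ≤ ENNReal.ofReal (Real.exp (L l - l * x)) := by
  refine le_ofReal_exp_of_forall_gt fun c hc => ?_
  have hH : IsOpen {y : ℝ | L l - c < l * y} := isOpen_lt continuous_const (continuous_const_mul l)
  calc nhdsLimsupPow μ t x ≤ limsupPow μ t {y | L l - c < l * y} :=
        nhdsLimsupPow_le hH (show L l - c < l * x by linarith)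
    _ ≤ ENNReal.ofReal (Real.exp (L l - (L l - c))) :=
        limsupPow_le_of_le_mul hpos hL hH.measurableSet fun y hy => le_of_lt hy
    _ = ENNReal.ofReal (Real.exp c) := by rw [sub_sub_cancel]

lemma expTight_of_mem_nhds_zero [IsDirected A (· ≤ ·)] [Nonempty A] (hpos : ∀ a, 0 < t a)
    (hto0 : Tendsto t atTop (𝓝 0)) {L : ℝ → ℝ} {G : Set ℝ} (hG : G ∈ 𝓝 0)
    (hL : ∀ l ∈ G, LambdaBar μ t (hlin l) = L l) : ExpTight μ t := by
  obtain ⟨r, hr, hrG⟩ : ∃ r > 0, r ∈ G ∧ -r ∈ G := by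
    obtain ⟨ρ, hρ, hball⟩ := Metric.mem_nhds_iff.mp hG
    refine ⟨ρ / 2, by positivity, hball ?_, hball ?_⟩ <;>
      simp [abs_of_pos hρ, half_lt_self hρ]
  intro ε hε
  set M := (max (L r) (L (-r)) - Real.log ε + 1) / r
  have hrM : r * M = max (L r) (L (-r)) - Real.log ε + 1 := mul_div_cancel₀ _ hr.ne'
  have htail : ∀ l, L l ≤ max (L r) (L (-r)) →
      ENNReal.ofReal (Real.exp (L l - r * M)) < ENNReal.ofReal ε := fun l hl => by
    rw [ENNReal.ofReal_lt_ofReal_iff hε, ← Real.lt_log_iff_exp_lt hε, hrM]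
    linarith
  refine ⟨Icc (-M) M, isCompact_Icc, ?_⟩
  calc limsupPow μ t (Icc (-M) M)ᶜ ≤ limsupPow μ t (Iio (-M) ∪ Ioi M) :=
        limsupPow_mono hpos fun y hy => by
          rwa [mem_compl_iff, mem_Icc, not_and_or, not_le, not_le] at hy
    _ ≤ max (limsupPow μ t (Iio (-M))) (limsupPow μ t (Ioi M)) :=
        limsupPow_union_le hpos hto0 _ _
    _ < ENNReal.ofReal ε := by
        refine max_lt ?_ ?_
        · refine (limsupPow_le_of_le_mul hpos (hL _ hrG.2) measurableSet_Iio
            fun y hy => ?_).trans_lt (htail _ (le_max_right _ _))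
          nlinarith [mem_Iio.mp hy]
        · refine (limsupPow_le_of_le_mul hpos (hL _ hrG.1) measurableSet_Ioi
            fun y hy => ?_).trans_lt (htail _ (le_max_left _ _))
          nlinarith [mem_Ioi.mp hy]

end Chebyshev

section Varadhan

variable {μ : A → Measure X} {t : A → ℝ}

lemma ofReal_exp_mul_liminfPow_le (hpos : ∀ a, 0 < t a) {h : X → EReal} {r : ℝ} {H : Set X}
    (hH : MeasurableSet H) (hr : ∀ y ∈ H, (r : EReal) ≤ h y) :
    ENNReal.ofReal (Real.exp r) * liminfPow μ t H ≤ liminf (expPow μ t h) atTop := by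
  rw [liminfPow,
    ← ENNReal.liminf_const_mul_of_ne_zero_of_ne_top (by positivity) ENNReal.ofReal_ne_top]
  refine liminf_le_liminf (Eventually.of_forall fun a => ?_)
  have hint : ENNReal.ofReal (Real.exp ((t a)⁻¹ * r)) * μ a H
      ≤ ∫⁻ y, EReal.exp ((((t a)⁻¹ : ℝ) : EReal) * h y) ∂μ a := by
    rw [← setLIntegral_const]
    refine (setLIntegral_mono' hH fun y hy => ?_).trans (setLIntegral_le_lintegral _ _)
    rw [← EReal.exp_coe, EReal.coe_mul]
    exact EReal.exp_monotone (mul_le_mul_of_nonneg_left (hr y hy)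
      (EReal.coe_nonneg.mpr (inv_pos.mpr (hpos a)).le))
  show ENNReal.ofReal (Real.exp r) * μ a H ^ t a ≤ _
  rw [← ofReal_exp_mul_rpow (hpos a)]
  exact ENNReal.rpow_le_rpow hint (hpos a).le

lemma exp_mul_nhdsLiminfPow_le [OpensMeasurableSpace X] (hpos : ∀ a, 0 < t a) {h : X → EReal}
    (hcont : Continuous h) (x : X) :
    EReal.exp (h x) * nhdsLiminfPow μ t x ≤ liminf (expPow μ t h) atTop := by
  refine ENNReal.mul_le_of_forall_lt fun c hc b hb => ?_
  rw [← ENNReal.log_lt_log_iff, EReal.log_exp] at hc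
  obtain ⟨r, hcr, hrx⟩ := EReal.lt_iff_exists_real_btwn.mp hc
  have hH : IsOpen (h ⁻¹' Ioi r) := isOpen_Ioi.preimage hcont
  calc c * b ≤ ENNReal.ofReal (Real.exp r) * liminfPow μ t (h ⁻¹' Ioi r) := by
        gcongr
        · rw [← EReal.exp_coe, ← ENNReal.exp_log c]
          exact EReal.exp_monotone hcr.le
        · exact hb.le.trans (nhdsLiminfPow_le hH hrx)
    _ ≤ liminf (expPow μ t h) atTop :=
        ofReal_exp_mul_liminfPow_le hpos hH.measurableSet fun y hy => le_of_lt hy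

lemma sub_le_neg_of_add_le {a b : EReal} {r : ℝ} (h : a + r ≤ b) : a - b ≤ -r := by
  refine EReal.sub_le_of_le_add' ?_
  have := add_le_add h (le_refl ((-r : ℝ) : EReal))
  rwa [add_assoc, ← EReal.coe_add, add_neg_cancel, EReal.coe_zero, add_zero, EReal.coe_neg] at this

lemma lamStar_le_lOne [OpensMeasurableSpace X] [IsDirected A (· ≤ ·)] [Nonempty A]
    (hpos : ∀ a, 0 < t a) (hSub : ∀ a, μ a univ ≤ 1) {S : Set (X → EReal)}
    (hScont : ∀ h ∈ S, Continuous h) (hSex : ∀ h ∈ S, LambdaExists μ t h) (x : X) :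
    LamStar μ t S x ≤ lOne μ t x := by
  refine iSup₂_le fun h hh => ?_
  by_cases h0 : nhdsLiminfPow μ t x = 0
  · rw [lOne_eq, h0, ENNReal.log_zero, EReal.neg_bot]
    exact le_top
  have hvar := exp_mul_nhdsLiminfPow_le (μ := μ) hpos (hScont h hh) x
  rw [ENNReal.log_injective (hSex h hh)] at hvar
  have hle : ENNReal.log (nhdsLiminfPow μ t x) ≤ 0 :=
    ENNReal.log_le_zero_iff.mpr (nhdsLiminfPow_le_one hpos hSub x)
  obtain ⟨r, hr⟩ : ∃ r : ℝ, ENNReal.log (nhdsLiminfPow μ t x) = r :=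
    ⟨_, (EReal.coe_toReal (hle.trans_lt EReal.zero_lt_top).ne
      (ENNReal.log_eq_bot_iff.not.mpr h0)).symm⟩
  have hlog := ENNReal.log_monotone hvar
  rw [ENNReal.log_mul_add, EReal.log_exp, hr] at hlog
  rw [lOne_eq, hr]
  exact sub_le_neg_of_add_le hlog

end Varadhan

section ExposedPoints

lemma le_liminf_of_le_mul_max {ι : Type*} {f : Filter ι} [f.NeBot] {k a b c d : ι → ℝ≥0∞}
    {α β γ : ℝ≥0∞} (hk : Tendsto k f (𝓝 1)) (ha : Tendsto a f (𝓝 α)) (hc : Tendsto c f (𝓝 γ))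
    (hd : Tendsto d f (𝓝 β)) (hαβ : α < β) (hγβ : γ < β)
    (h : ∀ᶠ i in f, d i ≤ k i * max (a i) (max (b i) (c i))) : β ≤ liminf b f := by
  obtain ⟨β', hβ', hβ'β⟩ := exists_between (max_lt hαβ hγβ)
  have hka : Tendsto (fun i => k i * a i) f (𝓝 α) := by
    simpa using ENNReal.Tendsto.mul hk (Or.inl one_ne_zero) ha (Or.inr ENNReal.one_ne_top)
  have hkc : Tendsto (fun i => k i * c i) f (𝓝 γ) := by
    simpa using ENNReal.Tendsto.mul hk (Or.inl one_ne_zero) hc (Or.inr ENNReal.one_ne_top)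
  have hdb : ∀ᶠ i in f, d i ≤ k i * b i := by
    filter_upwards [h, hka.eventually_lt_const ((le_max_left _ _).trans_lt hβ'),
      hkc.eventually_lt_const ((le_max_right _ _).trans_lt hβ'), hd.eventually_const_lt hβ'β]
      with i hi hai hci hdi
    rw [mul_max, mul_max] at hi
    rcases le_max_iff.mp hi with h' | h'
    · exact absurd (h'.trans_lt (hai.trans hdi)) (lt_irrefl _)
    rcases le_max_iff.mp h' with h' | h'
    · exact h'
    · exact absurd (h'.trans_lt (hci.trans hdi)) (lt_irrefl _)
  calc β = liminf d f := hd.liminf_eq.symm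
    _ ≤ liminf (k * b) f := liminf_le_liminf hdb
    _ ≤ limsup k f * liminf b f :=
        ENNReal.liminf_mul_le (by simp [hk.limsup_eq]) (by simp [hk.limsup_eq])
    _ = liminf b f := by rw [hk.limsup_eq, one_mul]

lemma add_add_le_three_mul_max (a b c : ℝ≥0∞) : a + (b + c) ≤ 3 * max a (max b c) :=
  calc a + (b + c) ≤ max a (max b c) + (max a (max b c) + max a (max b c)) :=
        add_le_add (le_max_left _ _) (add_le_add ((le_max_left _ _).trans (le_max_right _ _))
          ((le_max_right _ _).trans (le_max_right _ _)))
    _ = 3 * max a (max b c) := by ring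

/-- Off `(x - δ, x + δ)` the tilt by `λ + θ` is dominated by the tilt by `λ` or by `λ + 2θ`. -/
lemma ofReal_exp_le_add_indicator_add {s : ℝ} (hs : 0 ≤ s) (lam θ x δ y : ℝ) :
    ENNReal.ofReal (Real.exp (s * ((lam + θ) * y))) ≤
      ENNReal.ofReal (Real.exp (s * (θ * x - |θ| * δ))) *
          ENNReal.ofReal (Real.exp (s * (lam * y))) +
        ((Ioo (x - δ) (x + δ)).indicator
            (fun _ => ENNReal.ofReal (Real.exp (s * ((lam + θ) * x + |lam + θ| * δ)))) y +
          ENNReal.ofReal (Real.exp (s * (-(θ * x) - |θ| * δ))) *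
            ENNReal.ofReal (Real.exp (s * ((lam + 2 * θ) * y)))) := by
  have hmono : ∀ {p q : ℝ}, p ≤ q →
      ENNReal.ofReal (Real.exp (s * p)) ≤ ENNReal.ofReal (Real.exp (s * q)) := fun h =>
    ENNReal.ofReal_le_ofReal (Real.exp_le_exp.mpr (mul_le_mul_of_nonneg_left h hs))
  simp only [← ofReal_exp_add, ← mul_add]
  by_cases hy : y ∈ Ioo (x - δ) (x + δ)
  · rw [indicator_of_mem hy]
    refine le_add_left (le_add_right (hmono ?_))
    have hyx : |y - x| ≤ δ := abs_sub_le_iff.mpr ⟨by linarith [hy.2], by linarith [hy.1]⟩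
    nlinarith [le_abs_self ((lam + θ) * (y - x)), abs_mul (lam + θ) (y - x),
      mul_le_mul_of_nonneg_left hyx (abs_nonneg (lam + θ))]
  have hδ : |θ| * δ ≤ |θ * y - θ * x| := by
    rw [← mul_sub, abs_mul]
    refine mul_le_mul_of_nonneg_left ?_ (abs_nonneg θ)
    rw [mem_Ioo, not_and_or, not_lt, not_lt] at hy
    rcases hy with hy | hy
    · exact (abs_sub_comm y x).symm ▸ le_abs.mpr (Or.inl (by linarith))
    · exact le_abs.mpr (Or.inl (by linarith))
  rcases le_abs'.mp hδ with h | h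
  · exact le_add_right (hmono (by linear_combination h))
  · exact le_add_left (le_add_left (hmono (by linear_combination h)))

lemma rpow_lintegral_exp_le (ν : Measure ℝ) {T : ℝ} (hT : 0 < T) (lam θ x δ : ℝ) :
    (∫⁻ y, ENNReal.ofReal (Real.exp (T⁻¹ * ((lam + θ) * y))) ∂ν) ^ T ≤ 3 ^ T *
      max (ENNReal.ofReal (Real.exp (θ * x - |θ| * δ)) *
          (∫⁻ y, ENNReal.ofReal (Real.exp (T⁻¹ * (lam * y))) ∂ν) ^ T)
        (max (ENNReal.ofReal (Real.exp ((lam + θ) * x + |lam + θ| * δ)) *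
            ν (Ioo (x - δ) (x + δ)) ^ T)
          (ENNReal.ofReal (Real.exp (-(θ * x) - |θ| * δ)) *
            (∫⁻ y, ENNReal.ofReal (Real.exp (T⁻¹ * ((lam + 2 * θ) * y))) ∂ν) ^ T)) := by
  set g : ℝ → ℝ → ℝ≥0∞ := fun u y => ENNReal.ofReal (Real.exp (T⁻¹ * (u * y)))
  set e : ℝ → ℝ≥0∞ := fun q => ENNReal.ofReal (Real.exp (T⁻¹ * q))
  have hg : ∀ u, Measurable (g u) := fun u => by fun_prop
  have hint : ∫⁻ y, g (lam + θ) y ∂ν ≤ e (θ * x - |θ| * δ) * ∫⁻ y, g lam y ∂ν +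
      (e ((lam + θ) * x + |lam + θ| * δ) * ν (Ioo (x - δ) (x + δ)) +
        e (-(θ * x) - |θ| * δ) * ∫⁻ y, g (lam + 2 * θ) y ∂ν) := by
    refine (lintegral_mono fun y => ofReal_exp_le_add_indicator_add (inv_pos.mpr hT).le
      lam θ x δ y).trans_eq ?_
    rw [lintegral_add_left ((hg lam).const_mul _), lintegral_add_right _ ((hg _).const_mul _),
      lintegral_const_mul _ (hg lam), lintegral_const_mul _ (hg _),
      lintegral_indicator_const measurableSet_Ioo]
  calc (∫⁻ y, g (lam + θ) y ∂ν) ^ T ≤ (3 * max (e (θ * x - |θ| * δ) * ∫⁻ y, g lam y ∂ν)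
        (max (e ((lam + θ) * x + |lam + θ| * δ) * ν (Ioo (x - δ) (x + δ)))
          (e (-(θ * x) - |θ| * δ) * ∫⁻ y, g (lam + 2 * θ) y ∂ν))) ^ T :=
        ENNReal.rpow_le_rpow (hint.trans (add_add_le_three_mul_max _ _ _)) hT.le
    _ = _ := by
        rw [ENNReal.mul_rpow_of_nonneg _ _ hT.le, (ENNReal.monotone_rpow_of_nonneg hT.le).map_max,
          (ENNReal.monotone_rpow_of_nonneg hT.le).map_max, ofReal_exp_mul_rpow hT,
          ofReal_exp_mul_rpow hT, ofReal_exp_mul_rpow hT]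

variable {μ : A → Measure ℝ} {t : A → ℝ}

lemma ofReal_exp_le_liminfPow_Ioo [IsDirected A (· ≤ ·)] [Nonempty A] (hpos : ∀ a, 0 < t a)
    (hto0 : Tendsto t atTop (𝓝 0)) {L : ℝ → ℝ} {lam θ x δ : ℝ}
    (h₀ : Tendsto (expPow μ t (hlin lam)) atTop (𝓝 (ENNReal.ofReal (Real.exp (L lam)))))
    (h₁ : Tendsto (expPow μ t (hlin (lam + θ))) atTop
      (𝓝 (ENNReal.ofReal (Real.exp (L (lam + θ))))))
    (h₂ : Tendsto (expPow μ t (hlin (lam + 2 * θ))) atTop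
      (𝓝 (ENNReal.ofReal (Real.exp (L (lam + 2 * θ))))))
    (hlt₀ : θ * x - |θ| * δ + L lam < L (lam + θ))
    (hlt₂ : -(θ * x) - |θ| * δ + L (lam + 2 * θ) < L (lam + θ)) :
    ENNReal.ofReal (Real.exp (L (lam + θ) - ((lam + θ) * x + |lam + θ| * δ)))
      ≤ liminfPow μ t (Ioo (x - δ) (x + δ)) := by
  have hconst : ∀ {u v : ℝ} {F : A → ℝ≥0∞}, Tendsto F atTop (𝓝 (ENNReal.ofReal (Real.exp v))) →
      Tendsto (fun a => ENNReal.ofReal (Real.exp u) * F a) atTop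
        (𝓝 (ENNReal.ofReal (Real.exp (u + v)))) := fun hF => by
    rw [ofReal_exp_add]
    exact ENNReal.Tendsto.const_mul hF (Or.inr ENNReal.ofReal_ne_top)
  have hlt : ∀ {u v : ℝ}, u < v → ENNReal.ofReal (Real.exp u) < ENNReal.ofReal (Real.exp v) :=
    fun h => (ENNReal.ofReal_lt_ofReal_iff (Real.exp_pos _)).mpr (Real.exp_lt_exp.mpr h)
  rw [ofReal_exp_sub_le_iff, liminfPow,
    ← ENNReal.liminf_const_mul_of_ne_zero_of_ne_top (by positivity) ENNReal.ofReal_ne_top]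
  exact le_liminf_of_le_mul_max
    (tendsto_const_rpow_of_tendsto_zero (by norm_num) ENNReal.ofNat_ne_top hto0)
    (hconst h₀) (hconst h₂) h₁ (hlt hlt₀) (hlt hlt₂)
    (Eventually.of_forall fun a => rpow_lintegral_exp_le _ (hpos a) _ _ _ _)

lemma exists_step_of_eventually {lam : ℝ} {s : Set ℝ} {P : ℝ → Prop}
    (hs : s = Iio lam ∨ s = Ioi lam) (hP : ∀ᶠ u in 𝓝[s] lam, P u) :
    ∃ θ ≠ 0, |θ| ≤ 1 ∧ P (lam + θ) ∧ P (lam + 2 * θ) := by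
  rcases hs with rfl | rfl
  · obtain ⟨w, hw, hsub⟩ := mem_nhdsLT_iff_exists_Ioo_subset.mp hP
    have hθ : 0 < min ((lam - w) / 3) 1 := lt_min (by linarith [mem_Iio.mp hw]) one_pos
    have hθw := min_le_left ((lam - w) / 3) 1
    refine ⟨-min ((lam - w) / 3) 1, neg_ne_zero.mpr hθ.ne', ?_, hsub ⟨?_, ?_⟩, hsub ⟨?_, ?_⟩⟩
    · rw [abs_neg, abs_of_pos hθ]
      exact min_le_right _ _
    all_goals linarith
  · obtain ⟨w, hw, hsub⟩ := mem_nhdsGT_iff_exists_Ioo_subset.mp hP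
    have hθ : 0 < min ((w - lam) / 3) 1 := lt_min (by linarith [mem_Ioi.mp hw]) one_pos
    have hθw := min_le_left ((w - lam) / 3) 1
    refine ⟨min ((w - lam) / 3) 1, hθ.ne', ?_, hsub ⟨?_, ?_⟩, hsub ⟨?_, ?_⟩⟩
    · rw [abs_of_pos hθ]
      exact min_le_right _ _
    all_goals linarith

lemma ofReal_exp_le_liminfPow_of_hasDerivWithinAt [IsDirected A (· ≤ ·)] [Nonempty A]
    (hpos : ∀ a, 0 < t a) (hto0 : Tendsto t atTop (𝓝 0)) {L : ℝ → ℝ} {lam x : ℝ} {U : Set ℝ}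
    (hU : U ∈ 𝓝 lam)
    (hconv : ∀ u ∈ U, Tendsto (expPow μ t (hlin u)) atTop (𝓝 (ENNReal.ofReal (Real.exp (L u)))))
    {s : Set ℝ} (hs : s = Iio lam ∨ s = Ioi lam) (hder : HasDerivWithinAt L x s lam)
    {H : Set ℝ} (hH : IsOpen H) (hxH : x ∈ H) :
    ENNReal.ofReal (Real.exp (L lam - lam * x)) ≤ liminfPow μ t H := by
  obtain ⟨δ₀, hδ₀, hball⟩ := Metric.isOpen_iff.mp hH x hxH
  refine ofReal_exp_le_of_forall_lt fun c hc => ?_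
  -- The slope accuracy `δ / 4` keeps the rates for `λ` and `λ + 2θ` at least `|θ|δ / 4` below
  -- `L (λ + θ)`, and the total loss `(|λ| + 2)δ` stays below `L λ - λ x - c`.
  set δ := min δ₀ ((L lam - lam * x - c) / (|lam| + 2))
  have hδ : 0 < δ := lt_min hδ₀ (div_pos (by linarith) (by positivity))
  have hδc : (|lam| + 2) * δ ≤ L lam - lam * x - c := by
    rw [mul_comm, ← le_div_iff₀ (by positivity)]
    exact min_le_right _ _
  have hP : ∀ᶠ u in 𝓝[s] lam, u ∈ U ∧ |L u - L lam - (u - lam) * x| ≤ δ / 4 * |u - lam| :=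
    Eventually.and (mem_nhdsWithin_of_mem_nhds hU) <| by
      simpa only [Real.norm_eq_abs, smul_eq_mul] using hder.isLittleO.def (by positivity)
  obtain ⟨θ, hθ, hθ1, ⟨hU₁, he₁⟩, ⟨hU₂, he₂⟩⟩ := exists_step_of_eventually hs hP
  rw [add_sub_cancel_left] at he₁ he₂
  rw [abs_mul, abs_two] at he₂
  obtain ⟨he₁l, -⟩ := abs_le.mp he₁
  obtain ⟨-, he₂u⟩ := abs_le.mp he₂
  have hθδ : 0 < |θ| * δ := mul_pos (abs_pos.mpr hθ) hδ
  have habs : |lam + θ| * δ ≤ (|lam| + 1) * δ :=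
    mul_le_mul_of_nonneg_right ((abs_add_le _ _).trans (by linarith)) hδ.le
  have hθδ' : |θ| * δ ≤ δ := mul_le_of_le_one_left hδ.le hθ1
  calc ENNReal.ofReal (Real.exp c)
      ≤ ENNReal.ofReal (Real.exp (L (lam + θ) - ((lam + θ) * x + |lam + θ| * δ))) :=
        ENNReal.ofReal_le_ofReal (Real.exp_le_exp.mpr (by linarith))
    _ ≤ liminfPow μ t (Ioo (x - δ) (x + δ)) :=
        ofReal_exp_le_liminfPow_Ioo hpos hto0 (hconv lam (mem_of_mem_nhds hU)) (hconv _ hU₁)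
          (hconv _ hU₂) (by linarith) (by linarith)
    _ ≤ liminfPow μ t H := liminfPow_mono hpos <| by
        rw [← Real.ball_eq_Ioo]
        exact (Metric.ball_subset_ball (min_le_left _ _)).trans hball

end ExposedPoints

section RateFunction

variable {μ : A → Measure X} {t : A → ℝ}

variable (μ t) in
/-- `l₁` as an `ℝ≥0∞`-valued function; nothing is lost since `l₁ ≥ 0` for sub-probability
measures (`coe_rate`). -/
def rate (x : X) : ℝ≥0∞ := (lOne μ t x).toENNReal

variable [IsDirected A (· ≤ ·)] [Nonempty A]

lemma coe_rate (hpos : ∀ a, 0 < t a) (hSub : ∀ a, μ a univ ≤ 1) (x : X) :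
    (rate μ t x : EReal) = lOne μ t x :=
  EReal.coe_toENNReal <| EReal.neg_nonneg.mpr <| ENNReal.log_le_zero_iff.mpr <|
    nhdsLiminfPow_le_one hpos hSub x

lemma exp_neg_rate (hpos : ∀ a, 0 < t a) (hSub : ∀ a, μ a univ ≤ 1) (x : X) :
    EReal.exp (-(rate μ t x : EReal)) = nhdsLiminfPow μ t x := by
  rw [coe_rate hpos hSub, lOne_eq, neg_neg, ENNReal.exp_log]

lemma iSup_exp_neg_rate (hpos : ∀ a, 0 < t a) (hSub : ∀ a, μ a univ ≤ 1) (s : Set X) :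
    ⨆ x ∈ s, EReal.exp (-(rate μ t x : EReal)) = ⨆ x ∈ s, nhdsLiminfPow μ t x := by
  simp only [exp_neg_rate hpos hSub]

lemma lowerSemicontinuous_rate : LowerSemicontinuous (rate μ t) :=
  Continuous.comp_upperSemicontinuous_antitone (g := fun y => (-ENNReal.log y).toENNReal)
    (EReal.continuous_toENNReal.comp (continuous_neg.comp ENNReal.continuous_log))
    upperSemicontinuous_nhdsLiminfPow
    fun _ _ h => EReal.toENNReal_le_toENNReal (EReal.neg_le_neg_iff.mpr (ENNReal.log_monotone h))

end RateFunction

section Identification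

variable {μ : A → Measure ℝ} {t : A → ℝ} {L : ℝ → ℝ} {G : Set ℝ}

lemma le_legG {l x : ℝ} (hl : l ∈ G) : ((l * x - L l : ℝ) : EReal) ≤ LegG L G x :=
  le_iSup₂_of_le (f := fun l (_ : l ∈ G) => ((l * x - L l : ℝ) : EReal)) l hl le_rfl

lemma legG_le_lamStar {S : Set (ℝ → EReal)} (hSlin : ∀ l ∈ G, hlin l ∈ S)
    (hL : ∀ l ∈ G, LambdaBar μ t (hlin l) = L l) (x : ℝ) : LegG L G x ≤ LamStar μ t S x :=
  iSup₂_le fun l hl => le_iSup₂_of_le (hlin l) (hSlin l hl) <| by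
    rw [hL l hl]
    exact (EReal.coe_sub _ _).le

lemma lOne_le_legG_of_le {l x : ℝ} (hl : l ∈ G)
    (h : ENNReal.ofReal (Real.exp (L l - l * x)) ≤ nhdsLiminfPow μ t x) :
    lOne μ t x ≤ LegG L G x :=
  calc lOne μ t x ≤ -ENNReal.log (ENNReal.ofReal (Real.exp (L l - l * x))) :=
        EReal.neg_le_neg_iff.mpr (ENNReal.log_monotone h)
    _ = ((l * x - L l : ℝ) : EReal) := by
        rw [← EReal.exp_coe, EReal.log_exp, ← EReal.coe_neg, neg_sub]
    _ ≤ LegG L G x := le_legG hl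

lemma lOne_le_legG_of_le_neg_lambdaBar_zero (h0 : (0 : ℝ) ∈ G)
    (hL : LambdaBar μ t (hlin 0) = L 0) {x : ℝ}
    (hle : lOne μ t x ≤ -LambdaBar μ t (fun _ => 0)) : lOne μ t x ≤ LegG L G x := by
  rw [← hlin_zero, hL] at hle
  calc lOne μ t x ≤ ((0 * x - L 0 : ℝ) : EReal) := by simpa using hle
    _ ≤ LegG L G x := le_legG h0

variable [IsDirected A (· ≤ ·)] [Nonempty A]

lemma exists_ofReal_exp_le_nhdsLiminfPow (hpos : ∀ a, 0 < t a) (hto0 : Tendsto t atTop (𝓝 0))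
    (hG : IsOpen G)
    (hconv : ∀ l ∈ G, Tendsto (expPow μ t (hlin l)) atTop (𝓝 (ENNReal.ofReal (Real.exp (L l)))))
    {x : ℝ} (hx : x ∈ ranLR L G) :
    ∃ l ∈ G, ENNReal.ofReal (Real.exp (L l - l * x)) ≤ nhdsLiminfPow μ t x := by
  obtain ⟨l, hl, hder⟩ := hx
  refine ⟨l, hl, le_iInf₂ fun H hH => le_iInf fun hxH => ?_⟩
  rcases hder with hder | hder
  · exact ofReal_exp_le_liminfPow_of_hasDerivWithinAt hpos hto0 (hG.mem_nhds hl) hconv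
      (Or.inl rfl) hder hH hxH
  · exact ofReal_exp_le_liminfPow_of_hasDerivWithinAt hpos hto0 (hG.mem_nhds hl) hconv
      (Or.inr rfl) hder hH hxH

lemma nhdsLimsupPow_le_nhdsLiminfPow (hpos : ∀ a, 0 < t a) (hto0 : Tendsto t atTop (𝓝 0))
    (hG : IsOpen G)
    (hconv : ∀ l ∈ G, Tendsto (expPow μ t (hlin l)) atTop (𝓝 (ENNReal.ofReal (Real.exp (L l)))))
    (hL : ∀ l ∈ G, LambdaBar μ t (hlin l) = L l)
    (hran : {x : ℝ | lZero μ t x ≠ ⊤} ∩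
        {x : ℝ | - LambdaBar μ t (fun _ => (0 : EReal)) < lOne μ t x} ⊆ ranLR L G) (x : ℝ) :
    nhdsLimsupPow μ t x ≤ nhdsLiminfPow μ t x := by
  by_cases h0 : nhdsLimsupPow μ t x = 0
  · exact h0.trans_le bot_le
  by_cases hlt : -LambdaBar μ t (fun _ => 0) < lOne μ t x
  · obtain ⟨l, hl, hexp⟩ := exists_ofReal_exp_le_nhdsLiminfPow hpos hto0 hG hconv
      (hran ⟨lZero_ne_top_iff.mpr h0, hlt⟩)
    exact (nhdsLimsupPow_le_exp hpos (hL l hl) x).trans hexp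
  · rw [not_lt, lambdaBar_zero, lOne_eq, EReal.neg_le_neg_iff, ENNReal.log_le_log_iff] at hlt
    exact (nhdsLimsupPow_le_limsupPow_univ x).trans hlt

lemma lOne_le_legG_of_lt (hpos : ∀ a, 0 < t a) (hto0 : Tendsto t atTop (𝓝 0)) (hG : IsOpen G)
    (hconv : ∀ l ∈ G, Tendsto (expPow μ t (hlin l)) atTop (𝓝 (ENNReal.ofReal (Real.exp (L l)))))
    (hran : {x : ℝ | lZero μ t x ≠ ⊤} ∩
        {x : ℝ | - LambdaBar μ t (fun _ => (0 : EReal)) < lOne μ t x} ⊆ ranLR L G) {x : ℝ}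
    (hx : lOne μ t x ≠ ⊤) (hlt : -LambdaBar μ t (fun _ => 0) < lOne μ t x) :
    lOne μ t x ≤ LegG L G x := by
  have h0 : nhdsLimsupPow μ t x ≠ 0 :=
    ne_bot_of_le_ne_bot (lOne_ne_top_iff.mp hx) (nhdsLiminfPow_le_nhdsLimsupPow x)
  obtain ⟨l, hl, h⟩ := exists_ofReal_exp_le_nhdsLiminfPow hpos hto0 hG hconv
    (hran ⟨lZero_ne_top_iff.mpr h0, hlt⟩)
  exact lOne_le_legG_of_le hl h

lemma lOne_eq_legG_and_lamStar (hpos : ∀ a, 0 < t a) (hSub : ∀ a, μ a univ ≤ 1)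
    {S : Set (ℝ → EReal)} (hScont : ∀ h ∈ S, Continuous h) (hSlin : ∀ l ∈ G, hlin l ∈ S)
    (hSex : ∀ h ∈ S, LambdaExists μ t h) (hL : ∀ l ∈ G, LambdaBar μ t (hlin l) = L l) {x : ℝ}
    (hle : lOne μ t x ≤ LegG L G x) :
    lOne μ t x = LegG L G x ∧ lOne μ t x = LamStar μ t S x := by
  have h₁ := legG_le_lamStar (μ := μ) hSlin hL x
  have h₂ := lamStar_le_lOne hpos hSub hScont hSex x
  exact ⟨le_antisymm hle (h₁.trans h₂), le_antisymm (hle.trans h₁) h₂⟩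

end Identification

end LDP

open LDP in
theorem statement5_general
    {A : Type*} [Preorder A] [IsDirected A (· ≤ ·)] [Nonempty A]
    (μ : A → Measure ℝ) (t : A → ℝ)
    (hSub : ∀ a, μ a Set.univ ≤ 1)
    (hpos : ∀ a, 0 < t a) (hto0 : Tendsto t atTop (𝓝 (0 : ℝ)))
    (G : Set ℝ) (hGopen : IsOpen G)
    (S : Set (ℝ → EReal)) (hScont : ∀ h ∈ S, Continuous h)
    (hSlin : ∀ l ∈ G, hlin l ∈ S)
    (hSex : ∀ h ∈ S, LambdaExists μ t h)
    (L : ℝ → ℝ) (hL : ∀ l ∈ G, LambdaBar μ t (hlin l) = ((L l : ℝ) : EReal))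
    (hran : {x : ℝ | lZero μ t x ≠ ⊤} ∩
        {x : ℝ | - LambdaBar μ t (fun _ => (0 : EReal)) < lOne μ t x} ⊆ ranLR L G) :
    ∃ J : ℝ → ℝ≥0∞, VagueLDP μ t J ∧
      (∀ x : ℝ, J x ≠ ⊤ → - LambdaBar μ t (fun _ => (0 : EReal)) < (J x : EReal) →
        ((J x : EReal) = LegG L G x ∧ (J x : EReal) = LamStar μ t S x)) ∧
      ((0 : ℝ) ∈ G → NarrowLDP μ t J ∧
        ∀ x : ℝ, J x ≠ ⊤ →
          ((J x : EReal) = LegG L G x ∧ (J x : EReal) = LamStar μ t S x)) := by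
  have hconv l (hl : l ∈ G) := tendsto_expPow (hSex _ (hSlin l hl)) (hL l hl)
  have hupper {F : Set ℝ} (hF : limsupPow μ t F ≤ ⨆ x ∈ F, nhdsLimsupPow μ t x) :
      limsupPow μ t F ≤ ⨆ x ∈ F, EReal.exp (-(rate μ t x : EReal)) := by
    rw [iSup_exp_neg_rate hpos hSub]
    exact hF.trans (iSup₂_mono fun x _ =>
      nhdsLimsupPow_le_nhdsLiminfPow hpos hto0 hGopen hconv hL hran x)
  have hlower {U : Set ℝ} (hU : IsOpen U) :
      ⨆ x ∈ U, EReal.exp (-(rate μ t x : EReal)) ≤ liminfPow μ t U := by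
    rw [iSup_exp_neg_rate hpos hSub]
    exact iSup₂_le fun x hx => nhdsLiminfPow_le hU hx
  have hident {x : ℝ} (hle : lOne μ t x ≤ LegG L G x) :
      (rate μ t x : EReal) = LegG L G x ∧ (rate μ t x : EReal) = LamStar μ t S x := by
    rw [coe_rate hpos hSub]
    exact lOne_eq_legG_and_lamStar hpos hSub hScont hSlin hSex hL hle
  have hexposed {x : ℝ} (hJ : rate μ t x ≠ ⊤)
      (hlt : -LambdaBar μ t (fun _ => 0) < (rate μ t x : EReal)) : lOne μ t x ≤ LegG L G x :=
    lOne_le_legG_of_lt hpos hto0 hGopen hconv hran (EReal.toENNReal_ne_top_iff.mp hJ)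
      (coe_rate hpos hSub x ▸ hlt)
  refine ⟨rate μ t, ⟨lowerSemicontinuous_rate, fun K hK =>
    hupper (limsupPow_le_iSup_of_isCompact hpos hto0 hK), fun U hU => hlower hU⟩,
    fun x hJ hlt => hident (hexposed hJ hlt), fun h0 => ⟨⟨lowerSemicontinuous_rate, fun F hF =>
      hupper (limsupPow_le_iSup_of_isClosed hpos hto0
        (expTight_of_mem_nhds_zero hpos hto0 (hGopen.mem_nhds h0) hL) hF),
      fun U hU => hlower hU⟩, fun x hJ => hident ?_⟩⟩
  by_cases hlt : -LambdaBar μ t (fun _ => 0) < (rate μ t x : EReal)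
  · exact hexposed hJ hlt
  · exact lOne_le_legG_of_le_neg_lambdaBar_zero h0 (hL 0 h0)
      (coe_rate hpos hSub x ▸ not_lt.mp hlt)

/-- Theorem (open problem), part (a). -/
theorem statement5
    {A : Type*} [Preorder A] [IsDirected A (· ≤ ·)] [Nonempty A]
    (μ : A → Measure ℝ) (t : A → ℝ)
    (hRadon : ∀ a, (μ a).InnerRegular) (hSub : ∀ a, μ a Set.univ ≤ 1)
    (hpos : ∀ a, 0 < t a) (hto0 : Tendsto t atTop (𝓝 (0 : ℝ)))
    (G : Set ℝ) (hGopen : IsOpen G) (hGint : G.OrdConnected) (hGne : G.Nonempty)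
    (S : Set (ℝ → EReal)) (hScont : ∀ h ∈ S, Continuous h) (hStop : ∀ h ∈ S, ∀ x, h x ≠ ⊤)
    (hSlin : ∀ l ∈ G, hlin l ∈ S)
    (hSex : ∀ h ∈ S, LambdaExists μ t h)
    (L : ℝ → ℝ) (hL : ∀ l ∈ G, LambdaBar μ t (hlin l) = ((L l : ℝ) : EReal))
    (hran : {x : ℝ | lZero μ t x ≠ ⊤} ∩
        {x : ℝ | - LambdaBar μ t (fun _ => (0 : EReal)) < lOne μ t x} ⊆ ranLR L G) :
    ∃ J : ℝ → ℝ≥0∞, VagueLDP μ t J ∧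
      (∀ x : ℝ, J x ≠ ⊤ → - LambdaBar μ t (fun _ => (0 : EReal)) < (J x : EReal) →
        ((J x : EReal) = LegG L G x ∧ (J x : EReal) = LamStar μ t S x)) ∧
      ((0 : ℝ) ∈ G → NarrowLDP μ t J ∧
        ∀ x : ℝ, J x ≠ ⊤ →
          ((J x : EReal) = LegG L G x ∧ (J x : EReal) = LamStar μ t S x)) :=
  statement5_general μ t hSub hpos hto0 G hGopen S hScont hSlin hSex L hL hran

end
end

section
/- Let X be a locally compact Hausdorff space. Then (μ_α) satisfies a vague large deviation principle with powers (t_α) if and only if l_0 = l_1; in that case the principle holds with rate function l_0. -/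
open Filter MeasureTheory Topology Set
open scoped ENNReal NNReal

noncomputable section

variable {X : Type*} [TopologicalSpace X] [MeasurableSpace X]
variable {A : Type*} [Preorder A]

/-!
Write `v⁺(x)` and `v⁻(x)` for the infima, over open neighbourhoods `G` of `x`, of
`limsup μ_α(G)^{t_α}` and `liminf μ_α(G)^{t_α}`, so that `l₀ = -log v⁺` and `l₁ = -log v⁻`.
Since `t_α → 0`, a union of `N` sets costs only a factor `N^{t_α} → 1` (the principle of the
largest term), so covering a compact `K` by finitely many small open sets gives
`limsup μ_α(K)^{t_α} ≤ sup_K v⁺`. As `v⁺` is upper semicontinuous, `J = -log v⁺` is then a rate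
function with the compact upper bound, and the open lower bound is exactly `v⁺ ≤ v⁻`.
Conversely, given a vague LDP with rate `J` and an open `G ∋ x`, local compactness yields a
compact neighbourhood `K ⊆ G` of `x`, and
`v⁺(x) ≤ limsup μ_α(K)^{t_α} ≤ sup_K e^{-J} ≤ sup_G e^{-J} ≤ liminf μ_α(G)^{t_α}`.
-/

theorem ENNReal.tendsto_rpow_nhds_one {ι : Type*} {l : Filter ι} {s : ι → ℝ}
    (hs : Tendsto s l (𝓝 0)) {x : ℝ≥0∞} (hx0 : x ≠ 0) (hxtop : x ≠ ⊤) :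
    Tendsto (fun i => x ^ s i) l (𝓝 1) := by
  lift x to ℝ≥0 using hxtop
  have hx0' : x ≠ 0 := by exact_mod_cast hx0
  simp_rw [← ENNReal.coe_rpow_of_ne_zero hx0']
  rw [← ENNReal.coe_one, ENNReal.tendsto_coe, ← NNReal.tendsto_coe]
  simp_rw [NNReal.coe_rpow, NNReal.coe_one]
  have hcont := Real.continuousAt_const_rpow (NNReal.coe_ne_zero.2 hx0') (b := 0)
  rw [ContinuousAt, Real.rpow_zero] at hcont
  exact hcont.comp hs

-- The `+ 1` keeps the factor nonzero, so that it tends to `1` as `s → 0` even when `F = ∅`.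
theorem MeasureTheory.measure_biUnion_finset_rpow_le {Ω : Type*} [MeasurableSpace Ω]
    (ν : Measure Ω) {s : ℝ} (hs : 0 < s) {ι : Type*} (F : Finset ι) (G : ι → Set Ω) :
    ν (⋃ i ∈ F, G i) ^ s ≤ ((F.card : ℝ≥0∞) + 1) ^ s * F.sup fun i => ν (G i) ^ s := by
  have hmeas : ν (⋃ i ∈ F, G i) ≤ ((F.card : ℝ≥0∞) + 1) * F.sup fun i => ν (G i) :=
    calc ν (⋃ i ∈ F, G i) ≤ ∑ i ∈ F, ν (G i) := measure_biUnion_finset_le F G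
      _ ≤ F.card • F.sup fun i => ν (G i) :=
        Finset.sum_le_card_nsmul _ _ _ fun i hi => Finset.le_sup (f := fun i => ν (G i)) hi
      _ ≤ ((F.card : ℝ≥0∞) + 1) * F.sup fun i => ν (G i) := by
        rw [nsmul_eq_mul]; gcongr; exact le_self_add
  calc ν (⋃ i ∈ F, G i) ^ s
      ≤ (((F.card : ℝ≥0∞) + 1) * F.sup fun i => ν (G i)) ^ s := ENNReal.rpow_le_rpow hmeas hs.le
    _ = ((F.card : ℝ≥0∞) + 1) ^ s * F.sup fun i => ν (G i) ^ s := by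
      rw [ENNReal.mul_rpow_of_nonneg _ _ hs.le,
        Finset.apply_sup_eq_sup_comp_of_linearOrder (· ^ s)
          (ENNReal.monotone_rpow_of_nonneg hs.le) (ENNReal.zero_rpow_of_pos hs)]
      rfl

section MeasureNets

variable {Ω : Type*} [MeasurableSpace Ω] {ν : A → Measure Ω} {t : A → ℝ}

theorem limsup_rpow_measure_le_one (hSub : ∀ a, ν a univ ≤ 1) (ht : ∀ a, 0 ≤ t a)
    (S : Set Ω) : limsup (fun a => ν a S ^ t a) atTop ≤ 1 :=
  limsup_le_of_le (by isBoundedDefault) <| .of_forall fun a =>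
    ENNReal.rpow_le_one ((measure_mono (subset_univ S)).trans (hSub a)) (ht a)

theorem limsup_rpow_measure_mono (ht : ∀ a, 0 ≤ t a) {S T : Set Ω} (hST : S ⊆ T) :
    limsup (fun a => ν a S ^ t a) atTop ≤ limsup (fun a => ν a T ^ t a) atTop :=
  limsup_le_limsup <| .of_forall fun a => ENNReal.rpow_le_rpow (measure_mono hST) (ht a)

theorem limsup_rpow_measure_biUnion_le [(atTop : Filter A).NeBot] (hpos : ∀ a, 0 < t a)
    (hto0 : Tendsto t atTop (𝓝 0)) {ι : Type*} (F : Finset ι) (G : ι → Set Ω) :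
    limsup (fun a => ν a (⋃ i ∈ F, G i) ^ t a) atTop ≤
      F.sup fun i => limsup (fun a => ν a (G i) ^ t a) atTop := by
  refine le_of_forall_gt_imp_ge_of_dense fun c hc => ?_
  have hG : ∀ᶠ a in atTop, ∀ i ∈ F, ν a (G i) ^ t a < c :=
    (eventually_all_finset F).2 fun i hi =>
      eventually_lt_of_limsup_lt <|
        (Finset.le_sup (f := fun i => limsup (fun a => ν a (G i) ^ t a) atTop) hi).trans_lt hc
  have hunion : ∀ᶠ a in atTop,
      ν a (⋃ i ∈ F, G i) ^ t a ≤ ((F.card : ℝ≥0∞) + 1) ^ t a * c := by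
    filter_upwards [hG] with a ha
    refine (measure_biUnion_finset_rpow_le (ν a) (hpos a) F G).trans ?_
    gcongr
    exact Finset.sup_le fun i hi => (ha i hi).le
  have hfactor : Tendsto (fun a => ((F.card : ℝ≥0∞) + 1) ^ t a) atTop (𝓝 1) :=
    ENNReal.tendsto_rpow_nhds_one hto0 (by positivity) (by simp)
  calc limsup (fun a => ν a (⋃ i ∈ F, G i) ^ t a) atTop
      ≤ limsup (fun a => ((F.card : ℝ≥0∞) + 1) ^ t a * c) atTop := limsup_le_limsup hunion
    _ = c := by rw [(ENNReal.Tendsto.mul_const hfactor (.inl one_ne_zero)).limsup_eq, one_mul]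

end MeasureNets

section LocalMasses

variable (μ : A → Measure X) (t : A → ℝ)

def localLimsup (x : X) : ℝ≥0∞ :=
  ⨅ (G : Set X) (_ : IsOpen G) (_ : x ∈ G), limsup (fun a => μ a G ^ t a) atTop

def localLiminf (x : X) : ℝ≥0∞ :=
  ⨅ (G : Set X) (_ : IsOpen G) (_ : x ∈ G), liminf (fun a => μ a G ^ t a) atTop

theorem lZero_eq_lOne_iff {x : X} :
    lZero μ t x = lOne μ t x ↔ localLimsup μ t x = localLiminf μ t x :=
  neg_injective.eq_iff.trans ENNReal.log_injective.eq_iff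

variable {μ t}

theorem localLimsup_le_limsup {G : Set X} {x : X} (hG : IsOpen G) (hx : x ∈ G) :
    localLimsup μ t x ≤ limsup (fun a => μ a G ^ t a) atTop :=
  iInf₂_le_of_le G hG (iInf_le _ hx)

theorem localLiminf_le_liminf {G : Set X} {x : X} (hG : IsOpen G) (hx : x ∈ G) :
    localLiminf μ t x ≤ liminf (fun a => μ a G ^ t a) atTop :=
  iInf₂_le_of_le G hG (iInf_le _ hx)

theorem localLiminf_le_localLimsup [(atTop : Filter A).NeBot] (x : X) :
    localLiminf μ t x ≤ localLimsup μ t x :=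
  iInf₂_mono fun _ _ => iInf_mono fun _ => liminf_le_limsup

theorem localLimsup_le_one (hSub : ∀ a, μ a univ ≤ 1) (ht : ∀ a, 0 ≤ t a) (x : X) :
    localLimsup μ t x ≤ 1 :=
  (localLimsup_le_limsup isOpen_univ (mem_univ x)).trans
    (limsup_rpow_measure_le_one hSub ht univ)

theorem upperSemicontinuous_localLimsup : UpperSemicontinuous (localLimsup μ t) := by
  intro x c hc
  simp only [localLimsup, iInf_lt_iff] at hc
  obtain ⟨G, hG, hxG, hGc⟩ := hc
  filter_upwards [hG.mem_nhds hxG] with y hy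
  exact (localLimsup_le_limsup hG hy).trans_lt hGc

theorem limsup_rpow_measure_le_iSup_localLimsup [(atTop : Filter A).NeBot]
    (hpos : ∀ a, 0 < t a) (hto0 : Tendsto t atTop (𝓝 0)) {K : Set X} (hK : IsCompact K) :
    limsup (fun a => μ a K ^ t a) atTop ≤ ⨆ x ∈ K, localLimsup μ t x := by
  refine le_of_forall_gt_imp_ge_of_dense fun c hc => ?_
  have hcover : ∀ x : K, ∃ G : Set X, IsOpen G ∧ (x : X) ∈ G ∧
      limsup (fun a => μ a G ^ t a) atTop < c := by
    intro x
    simpa only [localLimsup, iInf_lt_iff, exists_prop] using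
      (le_biSup (localLimsup μ t) x.2).trans_lt hc
  choose G hGo hxG hGc using hcover
  obtain ⟨F, hKF⟩ := hK.elim_finite_subcover G hGo fun x hx => mem_iUnion.2 ⟨⟨x, hx⟩, hxG _⟩
  calc limsup (fun a => μ a K ^ t a) atTop
      ≤ limsup (fun a => μ a (⋃ i ∈ F, G i) ^ t a) atTop :=
        limsup_rpow_measure_mono (fun a => (hpos a).le) hKF
    _ ≤ F.sup fun i => limsup (fun a => μ a (G i) ^ t a) atTop :=
        limsup_rpow_measure_biUnion_le hpos hto0 F G
    _ ≤ c := Finset.sup_le fun i _ => (hGc i).le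

end LocalMasses

section RateFunction

variable {μ : A → Measure X} {t : A → ℝ}

variable (μ t) in
def rateFunction (x : X) : ℝ≥0∞ := (lZero μ t x).toENNReal

theorem coe_rateFunction (hSub : ∀ a, μ a univ ≤ 1) (ht : ∀ a, 0 ≤ t a) (x : X) :
    (rateFunction μ t x : EReal) = lZero μ t x :=
  EReal.coe_toENNReal <| EReal.neg_nonneg.2 <|
    ENNReal.log_le_zero_iff.2 (localLimsup_le_one hSub ht x)

theorem exp_neg_rateFunction (hSub : ∀ a, μ a univ ≤ 1) (ht : ∀ a, 0 ≤ t a) (x : X) :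
    EReal.exp (-(rateFunction μ t x : EReal)) = localLimsup μ t x := by
  rw [coe_rateFunction hSub ht, lZero, neg_neg, ENNReal.exp_log, localLimsup]

theorem lowerSemicontinuous_rateFunction : LowerSemicontinuous (rateFunction μ t) :=
  Continuous.comp_upperSemicontinuous_antitone (g := fun v => (-ENNReal.log v).toENNReal)
    (EReal.continuous_toENNReal.comp (continuous_neg.comp ENNReal.continuous_log))
    upperSemicontinuous_localLimsup fun _ _ hvw =>
      EReal.toENNReal_le_toENNReal (EReal.neg_le_neg_iff.2 (ENNReal.log_monotone hvw))

theorem vagueLDP_rateFunction [(atTop : Filter A).NeBot] (hSub : ∀ a, μ a univ ≤ 1)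
    (hpos : ∀ a, 0 < t a) (hto0 : Tendsto t atTop (𝓝 0))
    (hloc : ∀ x, localLimsup μ t x = localLiminf μ t x) : VagueLDP μ t (rateFunction μ t) := by
  have hexp := exp_neg_rateFunction hSub fun a => (hpos a).le
  refine ⟨lowerSemicontinuous_rateFunction, fun K hK => ?_, fun G hG => iSup₂_le fun x hx => ?_⟩
  · simp_rw [hexp]
    exact limsup_rpow_measure_le_iSup_localLimsup hpos hto0 hK
  · rw [hexp, hloc]
    exact localLiminf_le_liminf hG hx

theorem VagueLDP.localLimsup_le_localLiminf [LocallyCompactSpace X] {J : X → ℝ≥0∞}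
    (hJ : VagueLDP μ t J) (ht : ∀ a, 0 ≤ t a) (x : X) :
    localLimsup μ t x ≤ localLiminf μ t x := by
  obtain ⟨-, hupper, hlower⟩ := hJ
  refine le_iInf₂ fun G hG => le_iInf fun hx => ?_
  obtain ⟨K, hK, hxK, hKG⟩ := exists_compact_subset hG hx
  calc localLimsup μ t x
      ≤ limsup (fun a => μ a (interior K) ^ t a) atTop := localLimsup_le_limsup isOpen_interior hxK
    _ ≤ limsup (fun a => μ a K ^ t a) atTop := limsup_rpow_measure_mono ht interior_subset
    _ ≤ ⨆ y ∈ K, EReal.exp (-(J y : EReal)) := hupper K hK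
    _ ≤ ⨆ y ∈ G, EReal.exp (-(J y : EReal)) := biSup_mono hKG
    _ ≤ liminf (fun a => μ a G ^ t a) atTop := hlower G hG

end RateFunction

theorem statement15_general
    {X : Type*} [TopologicalSpace X] [LocallyCompactSpace X]
    [MeasurableSpace X]
    {A : Type*} [Preorder A] [IsDirected A (· ≤ ·)] [Nonempty A]
    (μ : A → Measure X) (t : A → ℝ)
    (hSub : ∀ a, μ a Set.univ ≤ 1)
    (hpos : ∀ a, 0 < t a) (hto0 : Tendsto t atTop (𝓝 (0 : ℝ))) :
    ((∃ J : X → ℝ≥0∞, VagueLDP μ t J) ↔ (∀ x : X, lZero μ t x = lOne μ t x)) ∧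
    ((∀ x : X, lZero μ t x = lOne μ t x) →
      ∃ J : X → ℝ≥0∞, VagueLDP μ t J ∧ ∀ x : X, (J x : EReal) = lZero μ t x) := by
  have ht : ∀ a, 0 ≤ t a := fun a => (hpos a).le
  have hrate : (∀ x, lZero μ t x = lOne μ t x) →
      ∃ J : X → ℝ≥0∞, VagueLDP μ t J ∧ ∀ x, (J x : EReal) = lZero μ t x := fun h =>
    ⟨rateFunction μ t,
      vagueLDP_rateFunction hSub hpos hto0 fun x => (lZero_eq_lOne_iff μ t).1 (h x),
      coe_rateFunction hSub ht⟩
  refine ⟨⟨fun ⟨J, hJ⟩ x => (lZero_eq_lOne_iff μ t).2 ?_, fun h => (hrate h).imp fun _ => And.left⟩,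
    hrate⟩
  exact (hJ.localLimsup_le_localLiminf ht x).antisymm (localLiminf_le_localLimsup x)

/-- Lemma (preliminaries), part (a): vague LDP holds iff `l₀ = l₁`, with rate function `l₀`. -/
theorem statement15
    {X : Type*} [TopologicalSpace X] [T2Space X] [LocallyCompactSpace X]
    [MeasurableSpace X] [BorelSpace X]
    {A : Type*} [Preorder A] [IsDirected A (· ≤ ·)] [Nonempty A]
    (μ : A → Measure X) (t : A → ℝ)
    (hRadon : ∀ a, (μ a).InnerRegular) (hSub : ∀ a, μ a Set.univ ≤ 1)
    (hpos : ∀ a, 0 < t a) (hto0 : Tendsto t atTop (𝓝 (0 : ℝ))) :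
    ((∃ J : X → ℝ≥0∞, VagueLDP μ t J) ↔ (∀ x : X, lZero μ t x = lOne μ t x)) ∧
    ((∀ x : X, lZero μ t x = lOne μ t x) →
      ∃ J : X → ℝ≥0∞, VagueLDP μ t J ∧ ∀ x : X, (J x : EReal) = lZero μ t x) :=
  statement15_general μ t hSub hpos hto0

end
end

section
/- If (μ_α) satisfies a vague large deviation principle with powers (t_α) and rate function J, and (μ_α) is exponentially tight with respect to (t_α), then (μ_α) satisfies a narrow large deviation principle with the same powers (t_α) and the same rate function J. -/
open Filter MeasureTheory Topology Set
open scoped ENNReal NNReal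

noncomputable section

variable {X : Type*} [TopologicalSpace X] [MeasurableSpace X]
variable {A : Type*} [Preorder A]

theorem ENNReal.limsup_add_le' {ι : Type*} {l : Filter ι} (u v : ι → ℝ≥0∞) :
    limsup (u + v) l ≤ limsup u l + limsup v l := by
  refine ENNReal.le_of_forall_pos_le_add fun ε hε hfin => ?_
  have hε2 : ((ε : ℝ≥0∞) / 2) ≠ 0 := by simpa using hε.ne'
  obtain ⟨hu, hv⟩ := ENNReal.add_lt_top.1 hfin
  have hu' := eventually_lt_of_limsup_lt (ENNReal.lt_add_right hu.ne hε2)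
  have hv' := eventually_lt_of_limsup_lt (ENNReal.lt_add_right hv.ne hε2)
  calc limsup (u + v) l ≤ (limsup u l + ε / 2) + (limsup v l + ε / 2) :=
        limsup_le_of_le (by isBoundedDefault)
          ((hu'.and hv').mono fun _ h => (ENNReal.add_lt_add h.1 h.2).le)
    _ = limsup u l + limsup v l + ε := by rw [add_add_add_comm, ENNReal.add_halves]

theorem limsup_measure_rpow_le_add {Ω ι : Type*} [MeasurableSpace Ω] {l : Filter ι}
    (μ : ι → Measure Ω) (t : ι → ℝ) (ht : ∀ᶠ a in l, 0 ≤ t a ∧ t a ≤ 1) {s u v : Set Ω}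
    (hs : s ⊆ u ∪ v) :
    limsup (fun a => μ a s ^ t a) l ≤
      limsup (fun a => μ a u ^ t a) l + limsup (fun a => μ a v ^ t a) l := by
  refine (limsup_le_limsup (ht.mono fun a ⟨h0, h1⟩ => ?_)).trans (ENNReal.limsup_add_le' _ _)
  calc μ a s ^ t a ≤ (μ a u + μ a v) ^ t a :=
        ENNReal.rpow_le_rpow ((measure_mono hs).trans (measure_union_le u v)) h0
    _ ≤ μ a u ^ t a + μ a v ^ t a := ENNReal.rpow_add_le_add_rpow _ _ h0 h1

/-- Cover `F` by `F ∩ K`, where the compact-set bound applies, and `Kᶜ`, which tightness makes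
negligible; `t_α ≤ 1` makes `x ↦ x ^ t_α` subadditive, so the two bounds add up. -/
theorem limsup_measure_rpow_le_of_expTight {μ : A → Measure X} {t : A → ℝ}
    (ht : ∀ᶠ a in atTop, 0 ≤ t a ∧ t a ≤ 1) {J : X → ℝ≥0∞}
    (hcompact : ∀ K : Set X, IsCompact K →
      limsup (fun a => μ a K ^ (t a)) atTop ≤ ⨆ x ∈ K, EReal.exp (-(J x : EReal)))
    (htight : ExpTight μ t) {F : Set X} (hF : IsClosed F) :
    limsup (fun a => μ a F ^ (t a)) atTop ≤ ⨆ x ∈ F, EReal.exp (-(J x : EReal)) := by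
  refine ENNReal.le_of_forall_pos_le_add fun ε hε _ => ?_
  obtain ⟨K, hK, hKtail⟩ := htight ε hε
  have hFK : ⨆ x ∈ F ∩ K, EReal.exp (-(J x : EReal)) ≤ ⨆ x ∈ F, EReal.exp (-(J x : EReal)) :=
    biSup_mono fun _ hx => hx.1
  calc limsup (fun a => μ a F ^ t a) atTop
      ≤ limsup (fun a => μ a (F ∩ K) ^ t a) atTop + limsup (fun a => μ a Kᶜ ^ t a) atTop :=
        limsup_measure_rpow_le_add μ t ht fun x hx => (em (x ∈ K)).imp (⟨hx, ·⟩) id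
    _ ≤ (⨆ x ∈ F, EReal.exp (-(J x : EReal))) + ε := by
        rw [← ENNReal.ofReal_coe_nnreal]
        exact add_le_add ((hcompact _ (hK.inter_left hF)).trans hFK) hKtail.le

theorem statement16_general
    {X : Type*} [TopologicalSpace X] [MeasurableSpace X]
    {A : Type*} [Preorder A]
    (μ : A → Measure X) (t : A → ℝ)
    (hpos : ∀ a, 0 < t a) (hto0 : Tendsto t atTop (𝓝 (0 : ℝ)))
    (J : X → ℝ≥0∞) (hvague : VagueLDP μ t J) (htight : ExpTight μ t) :
    NarrowLDP μ t J := by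
  obtain ⟨hlsc, hcompact, hopen⟩ := hvague
  have ht : ∀ᶠ a in atTop, 0 ≤ t a ∧ t a ≤ 1 :=
    (hto0.eventually (Iic_mem_nhds one_pos)).mono fun a h => ⟨(hpos a).le, h⟩
  exact ⟨hlsc, fun F hF => limsup_measure_rpow_le_of_expTight ht hcompact htight hF, hopen⟩

/-- Lemma (preliminaries), part (b): vague LDP + exponential tightness implies narrow LDP. -/
theorem statement16
    {X : Type*} [TopologicalSpace X] [T2Space X] [MeasurableSpace X] [BorelSpace X]
    {A : Type*} [Preorder A] [IsDirected A (· ≤ ·)] [Nonempty A]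
    (μ : A → Measure X) (t : A → ℝ)
    (hRadon : ∀ a, (μ a).InnerRegular) (hSub : ∀ a, μ a Set.univ ≤ 1)
    (hpos : ∀ a, 0 < t a) (hto0 : Tendsto t atTop (𝓝 (0 : ℝ)))
    (J : X → ℝ≥0∞) (hvague : VagueLDP μ t J) (htight : ExpTight μ t) :
    NarrowLDP μ t J :=
  statement16_general μ t hpos hto0 J hvague htight

end
end

section
/- Let X be a Hausdorff topological space and S a set of continuous functions h : X → [-∞,∞) such that Λ(h) exists for every h ∈ S. Then Λ(h) ≥ sup_{x ∈ X} (h(x) − l_0(x)) for every h ∈ S, and consequently Λ|_S*(x) ≤ l_0(x) for all x ∈ X. In particular, if X = ℝ, G ⊂ ℝ is a nonempty open interval on which L exists and is finite, and S ⊇ {h_λ : λ ∈ G}, then L|_G*(x) ≤ Λ|_S*(x) ≤ l_0(x) for all x ∈ ℝ. -/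
open Filter MeasureTheory Topology Set
open scoped ENNReal NNReal

noncomputable section

variable {X : Type*} [TopologicalSpace X] [MeasurableSpace X]
variable {A : Type*} [Preorder A]

/-!
For `d < h x` the set `{h > d}` is an open neighbourhood `G'` of `x` on which
`e^{h/t_α} ≥ e^{d/t_α}`, so Chebyshev's inequality gives
`e^d μ_α(G')^{t_α} ≤ (∫ e^{h/t_α} dμ_α)^{t_α}`. Passing to the limsup and letting `d ↑ h x`
yields `e^{h x} e^{-l₀(x)} ≤ e^{Λ̄(h)}`, which is the first inequality; the bound on `Λ|_S^*`
is a rearrangement of it, and `L|_G^* ≤ Λ|_S^*` holds because the supremum defining `Λ|_S^*`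
runs over all `h_λ`, `λ ∈ G`.
-/

theorem EReal.sub_le_comm {a b c : EReal} : a - b ≤ c ↔ a - c ≤ b := by
  rcases eq_or_ne b ⊤ with rfl | hb
  · simp
  rcases eq_or_ne c ⊤ with rfl | hc
  · simp
  rw [EReal.sub_le_iff_le_add (.inr hc) (.inl hb), EReal.sub_le_iff_le_add (.inr hb) (.inl hc),
    add_comm]

section

variable {Ω ι : Type*} [MeasurableSpace Ω] (μ : ι → Measure Ω) (t : ι → ℝ)

lemma exp_mul_measure_rpow_le_expPow (h : Ω → EReal) {s : Set Ω} (hs : MeasurableSet s)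
    {e : EReal} (he : ∀ y ∈ s, e ≤ h y) {a : ι} (ha : 0 < t a) :
    EReal.exp e * μ a s ^ t a ≤ expPow μ t h a := by
  have hchebyshev : EReal.exp (((t a)⁻¹ : ℝ) * e) * μ a s
      ≤ ∫⁻ y, EReal.exp ((((t a)⁻¹ : ℝ) : EReal) * h y) ∂(μ a) :=
    calc EReal.exp (((t a)⁻¹ : ℝ) * e) * μ a s
        = ∫⁻ _ in s, EReal.exp (((t a)⁻¹ : ℝ) * e) ∂(μ a) := (setLIntegral_const _ _).symm
      _ ≤ ∫⁻ y in s, EReal.exp ((((t a)⁻¹ : ℝ) : EReal) * h y) ∂(μ a) :=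
          setLIntegral_mono' hs fun y hy => EReal.exp_monotone <|
            mul_le_mul_of_nonneg_left (he y hy) (mod_cast (inv_pos.mpr ha).le)
      _ ≤ _ := setLIntegral_le_lintegral _ _
  have hexp : EReal.exp (((t a)⁻¹ : ℝ) * e) ^ t a = EReal.exp e := by
    rw [← EReal.exp_mul, mul_comm, ← mul_assoc, ← EReal.coe_mul, mul_inv_cancel₀ ha.ne',
      EReal.coe_one, one_mul]
  calc EReal.exp e * μ a s ^ t a
      = (EReal.exp (((t a)⁻¹ : ℝ) * e) * μ a s) ^ t a := by
        rw [ENNReal.mul_rpow_of_nonneg _ _ ha.le, hexp]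
    _ ≤ expPow μ t h a := ENNReal.rpow_le_rpow hchebyshev ha.le

variable [TopologicalSpace Ω] [OpensMeasurableSpace Ω] [Preorder ι]

lemma exp_mul_iInf_limsup_le_limsup_expPow (hpos : ∀ a, 0 < t a) {h : Ω → EReal}
    (hh : Continuous h) (x : Ω) :
    EReal.exp (h x) * ⨅ (G : Set Ω) (_ : IsOpen G) (_ : x ∈ G), limsup (fun a => μ a G ^ t a) atTop
      ≤ limsup (expPow μ t h) atTop := by
  refine ENNReal.mul_le_of_forall_lt fun c hc b hb => ?_
  have hcx : ENNReal.log c < h x := by rwa [← EReal.exp_lt_exp_iff, ENNReal.exp_log]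
  set G := h ⁻¹' Ioi (ENNReal.log c)
  have hG : IsOpen G := isOpen_Ioi.preimage hh
  calc c * b ≤ c * limsup (fun a => μ a G ^ t a) atTop := by
        gcongr; exact hb.le.trans (iInf₂_le_of_le G hG (iInf_le _ hcx))
    _ = limsup (fun a => c * μ a G ^ t a) atTop :=
        (ENNReal.limsup_const_mul_of_ne_top (hc.trans_le le_top).ne).symm
    _ ≤ limsup (expPow μ t h) atTop := limsup_le_limsup <| .of_forall fun a => by
        simpa only [ENNReal.exp_log] using
          exp_mul_measure_rpow_le_expPow μ t h hG.measurableSet (fun y hy => le_of_lt hy) (hpos a)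

theorem sub_lZero_le_LambdaBar (hpos : ∀ a, 0 < t a) {h : Ω → EReal} (hh : Continuous h)
    (x : Ω) :
    h x - lZero μ t x ≤ LambdaBar μ t h :=
  calc h x - lZero μ t x
      = ENNReal.log (EReal.exp (h x) * ⨅ (G : Set Ω) (_ : IsOpen G) (_ : x ∈ G),
          limsup (fun a => μ a G ^ t a) atTop) := by
        rw [lZero, sub_eq_add_neg, neg_neg, ENNReal.log_mul_add, EReal.log_exp]
    _ ≤ LambdaBar μ t h :=
        ENNReal.log_monotone (exp_mul_iInf_limsup_le_limsup_expPow μ t hpos hh x)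

lemma LamStar_le_lZero (hpos : ∀ a, 0 < t a) {S : Set (Ω → EReal)}
    (hS : ∀ h ∈ S, Continuous h) (x : Ω) :
    LamStar μ t S x ≤ lZero μ t x :=
  iSup₂_le fun h hh => EReal.sub_le_comm.mp (sub_lZero_le_LambdaBar μ t hpos (hS h hh) x)

end

lemma LegG_le_LamStar {ι : Type*} [Preorder ι] (μ : ι → Measure ℝ) (t : ι → ℝ) {G : Set ℝ}
    {S : Set (ℝ → EReal)} (hS : ∀ l ∈ G, hlin l ∈ S) {L : ℝ → ℝ}
    (hL : ∀ l ∈ G, LambdaBar μ t (hlin l) = L l) (x : ℝ) :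
    LegG L G x ≤ LamStar μ t S x :=
  iSup₂_le fun l hl => le_iSup₂_of_le (hlin l) (hS l hl) <| by
    rw [hL l hl, hlin, EReal.coe_sub]

theorem statement18_general
    -- the general Hausdorff space part
    {X : Type*} [TopologicalSpace X] [MeasurableSpace X] [BorelSpace X]
    {A : Type*} [Preorder A]
    (μ : A → Measure X) (t : A → ℝ)
    (hpos : ∀ a, 0 < t a)
    (S : Set (X → EReal)) (hScont : ∀ h ∈ S, Continuous h)
    -- the particular case `X = ℝ`
    {A' : Type*} [Preorder A']
    (μ' : A' → Measure ℝ) (t' : A' → ℝ)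
    (hpos' : ∀ a, 0 < t' a)
    (G : Set ℝ)
    (S' : Set (ℝ → EReal)) (hScont' : ∀ h ∈ S', Continuous h)
    (hSlin' : ∀ l ∈ G, hlin l ∈ S')
    (L : ℝ → ℝ) (hL : ∀ l ∈ G, LambdaBar μ' t' (hlin l) = ((L l : ℝ) : EReal)) :
    (∀ h ∈ S, (⨆ x : X, (h x - lZero μ t x)) ≤ LambdaBar μ t h) ∧
    (∀ x : X, LamStar μ t S x ≤ lZero μ t x) ∧
    (∀ x : ℝ, LegG L G x ≤ LamStar μ' t' S' x ∧ LamStar μ' t' S' x ≤ lZero μ' t' x) :=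
  ⟨fun h hh => iSup_le (sub_lZero_le_LambdaBar μ t hpos (hScont h hh)),
    LamStar_le_lZero μ t hpos hScont,
    fun x => ⟨LegG_le_LamStar μ' t' hSlin' hL x, LamStar_le_lZero μ' t' hpos' hScont' x⟩⟩

/-- Basic inequalities: `Λ(h) ≥ sup_x (h(x) − l₀(x))`, hence `Λ|_S^* ≤ l₀`; in particular,
on `ℝ`, `L|_G^* ≤ Λ|_S^* ≤ l₀` when `S` contains all `h_λ`, `λ ∈ G`. -/
theorem statement18
    -- the general Hausdorff space part
    {X : Type*} [TopologicalSpace X] [T2Space X] [MeasurableSpace X] [BorelSpace X]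
    {A : Type*} [Preorder A] [IsDirected A (· ≤ ·)] [Nonempty A]
    (μ : A → Measure X) (t : A → ℝ)
    (hRadon : ∀ a, (μ a).InnerRegular) (hSub : ∀ a, μ a Set.univ ≤ 1)
    (hpos : ∀ a, 0 < t a) (hto0 : Tendsto t atTop (𝓝 (0 : ℝ)))
    (S : Set (X → EReal)) (hScont : ∀ h ∈ S, Continuous h) (hStop : ∀ h ∈ S, ∀ x, h x ≠ ⊤)
    (hSex : ∀ h ∈ S, LambdaExists μ t h)
    -- the particular case `X = ℝ`
    {A' : Type*} [Preorder A'] [IsDirected A' (· ≤ ·)] [Nonempty A']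
    (μ' : A' → Measure ℝ) (t' : A' → ℝ)
    (hRadon' : ∀ a, (μ' a).InnerRegular) (hSub' : ∀ a, μ' a Set.univ ≤ 1)
    (hpos' : ∀ a, 0 < t' a) (hto0' : Tendsto t' atTop (𝓝 (0 : ℝ)))
    (G : Set ℝ) (hGopen : IsOpen G) (hGint : G.OrdConnected) (hGne : G.Nonempty)
    (S' : Set (ℝ → EReal)) (hScont' : ∀ h ∈ S', Continuous h)
    (hStop' : ∀ h ∈ S', ∀ x, h x ≠ ⊤)
    (hSex' : ∀ h ∈ S', LambdaExists μ' t' h)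
    (hSlin' : ∀ l ∈ G, hlin l ∈ S')
    (L : ℝ → ℝ) (hL : ∀ l ∈ G, LambdaBar μ' t' (hlin l) = ((L l : ℝ) : EReal)) :
    (∀ h ∈ S, (⨆ x : X, (h x - lZero μ t x)) ≤ LambdaBar μ t h) ∧
    (∀ x : X, LamStar μ t S x ≤ lZero μ t x) ∧
    (∀ x : ℝ, LegG L G x ≤ LamStar μ' t' S' x ∧ LamStar μ' t' S' x ≤ lZero μ' t' x) :=
  statement18_general μ t hpos S hScont μ' t' hpos' G S' hScont' hSlin' L hL
end
end
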